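/- arXiv:1606.00465 — 10 statements merged into one kernel-verified Lean document; each statement's English description precedes it below -/
import Mathlib

section
/- Let g ∈ F_q[x] with g(0) = 0 and g'(0) ≠ 0, and suppose g = g₁ ∘ g₂ where g₁, g₂ ∈ F_q[x] both have degree greater than 1. Then the roots (in an algebraic closure of F_q) of the polynomial v_g(x) = g(-x)/(-x) do not form a single orbit under the Frobenius map x ↦ x^q. -/
open Polynomial

attribute [local instance] Classical.propDecidable

/-- The set `S` is a single orbit under the Frobenius map `x ↦ x^q`. -/
def IsSingleFrobeniusOrbit (q : ℕ) {K : Type*} [Field K] (S : Set K) : Prop :=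
  ∃ b ∈ S, S = Set.range fun i : ℕ => b ^ q ^ i

lemma frob_eval {F : Type*} [Field F] [Fintype F] {K : Type*} [Field K] [Algebra F K]
    (L : F[X]) (x : K) (i : ℕ) :
    (L.map (algebraMap F K)).eval (x ^ Fintype.card F ^ i)
      = ((L.map (algebraMap F K)).eval x) ^ Fintype.card F ^ i := by
  obtain ⟨p, hc⟩ := CharP.exists F
  obtain ⟨n, hp, hcard⟩ := @FiniteField.card F _ _ p hc
  haveI : Fact p.Prime := ⟨hp⟩
  haveI : CharP K p := charP_of_injective_algebraMap (algebraMap F K).injective p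
  haveI : ExpChar K p := ExpChar.prime Fact.out
  set f : K →+* K := iterateFrobenius K p (n * i) with hf
  have hfx : ∀ y : K, f y = y ^ Fintype.card F ^ i := by
    intro y
    rw [hf, iterateFrobenius_def, hcard, ← pow_mul]
  have hmap : (L.map (algebraMap F K)).map f = L.map (algebraMap F K) := by
    rw [Polynomial.map_map]
    congr 1
    ext a
    simp only [RingHom.comp_apply]
    rw [hfx, ← map_pow, FiniteField.pow_card_pow]
  rw [← hfx x]
  calc (L.map (algebraMap F K)).eval (f x)
      = ((L.map (algebraMap F K)).map f).eval (f x) := by rw [hmap]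
    _ = f ((L.map (algebraMap F K)).eval x) := by
        rw [eval_map, eval₂_hom]
    _ = _ := hfx _

lemma frob_inj {F : Type*} [Field F] [Fintype F] {K : Type*} [Field K] [Algebra F K]
    (m : ℕ) {x y : K} (h : x ^ Fintype.card F ^ m = y ^ Fintype.card F ^ m) : x = y := by
  obtain ⟨p, hc⟩ := CharP.exists F
  obtain ⟨n, hp, hcard⟩ := @FiniteField.card F _ _ p hc
  haveI : Fact p.Prime := ⟨hp⟩
  haveI : CharP K p := charP_of_injective_algebraMap (algebraMap F K).injective p
  haveI : ExpChar K p := ExpChar.prime Fact.out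
  apply (iterateFrobenius K p (n * m)).injective
  simp only [iterateFrobenius_def, pow_mul, ← hcard]
  exact h

/-- if `g = g₁ ∘ g₂` with both factors of degree `> 1`, `g(0) = 0`,
`g'(0) ≠ 0`, then the roots of `v_g(x) = g(-x)/(-x)` in an algebraic closure of `F_q`
do not form a single Frobenius orbit. -/
theorem stmt_1 {F : Type*} [Field F] [Fintype F] (g g₁ g₂ : F[X])
    (hcomp : g = g₁.comp g₂) (hdeg₁ : 1 < g₁.natDegree) (hdeg₂ : 1 < g₂.natDegree)
    (h0 : g.eval 0 = 0) (h0' : g.derivative.eval 0 ≠ 0)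
    (v : F[X]) (hv : (-X) * v = g.comp (-X)) :
    ¬ IsSingleFrobeniusOrbit (Fintype.card F)
      (↑(v.aroots (AlgebraicClosure F)).toFinset : Set (AlgebraicClosure F)) := by
  set K := AlgebraicClosure F
  set φ := algebraMap F K with hφ
  set q := Fintype.card F with hq
  rintro ⟨b, hbS, hS⟩
  have evalφ : ∀ (L : F[X]) (a : F), (L.map φ).eval (φ a) = φ (L.eval a) := by
    intro L a; rw [eval_map, eval₂_hom]
  -- basic nonvanishing
  have hgne : g ≠ 0 := by
    intro h; rw [h] at h0'; simp at h0'
  have hg₁ne : g₁ ≠ 0 := fun h => by simp [h] at hdeg₁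
  have hvne : v ≠ 0 := by
    intro h
    have : g.comp (-X) = 0 := by rw [← hv, h, mul_zero]
    have hg : g = 0 := by
      have := congrArg (fun p => p.comp (-X : F[X])) this
      simpa [comp_assoc] using this
    exact hgne hg
  -- v(0) = g'(0)
  have hv0 : v.eval 0 = g.derivative.eval 0 := by
    have hd := congrArg (fun p : F[X] => p.derivative.eval 0) hv
    simpa [derivative_comp] using hd
  -- g₂'(0) ≠ 0
  have hg₂d : g₂.derivative.eval 0 ≠ 0 := by
    intro h
    apply h0'
    rw [hcomp, derivative_comp]
    simp [h]
  -- membership in S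
  have hmemS : ∀ x : K, x ∈ (↑(v.aroots K).toFinset : Set K) ↔ (v.map φ).eval x = 0 := by
    intro x
    simp only [Finset.coe_sort_coe, Multiset.mem_toFinset, Finset.mem_coe, mem_aroots]
    constructor
    · rintro ⟨-, h⟩; rwa [aeval_def, ← eval_map] at h
    · intro h; exact ⟨hvne, by rwa [aeval_def, ← eval_map]⟩
  have hb0 : (v.map φ).eval b = 0 := (hmemS b).1 hbS
  have hbne : b ≠ 0 := by
    intro h
    rw [h] at hb0
    rw [← map_zero φ, evalφ] at hb0
    rw [map_zero φ] at hb0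
    rw [hv0] at hb0
    exact h0' ((_root_.map_eq_zero φ).1 hb0)
  set β : K := -b with hβ
  -- (-1)^(q^i) = -1
  have hneg : ∀ i : ℕ, ((-1 : K)) ^ q ^ i = -1 := by
    intro i
    have : ((-1 : F)) ^ q ^ i = -1 := FiniteField.pow_card_pow _ _
    calc ((-1 : K)) ^ q ^ i = φ ((-1 : F) ^ q ^ i) := by rw [map_pow, map_neg, map_one]
    _ = -1 := by rw [this, map_neg, map_one]
  -- roots of g description
  have hβpow : ∀ i : ℕ, β ^ q ^ i = -(b ^ q ^ i) := by
    intro i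
    rw [hβ, ← neg_one_mul, mul_pow, hneg, neg_one_mul]
  have hvKeval : ∀ x : K, (g.map φ).eval x = x * (v.map φ).eval (-x) := by
    intro x
    have h := congrArg (Polynomial.map φ) hv
    simp only [Polynomial.map_mul, Polynomial.map_neg, Polynomial.map_X, Polynomial.map_comp] at h
    have h2 := congrArg (Polynomial.eval (-x)) h.symm
    simp only [eval_comp, eval_mul, eval_neg, eval_X, neg_neg] at h2
    rw [(neg_neg x : - -x = x)] at h2
    exact h2
  have hgroots : ∀ x : K, ((g.map φ).eval x = 0 ↔ x = 0 ∨ ∃ i : ℕ, x = β ^ q ^ i) := by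
    intro x
    rw [hvKeval x, mul_eq_zero]
    constructor
    · rintro (rfl | h)
      · exact Or.inl rfl
      · right
        have : -x ∈ (↑(v.aroots K).toFinset : Set K) := (hmemS (-x)).2 h
        rw [hS] at this
        obtain ⟨i, hi⟩ := this
        refine ⟨i, ?_⟩
        simp only at hi
        rw [hβpow i, hi, neg_neg]
    · rintro (rfl | ⟨i, rfl⟩)
      · exact Or.inl rfl
      · right
        rw [hβpow i, (neg_neg (b ^ q ^ i) : - -(b ^ q ^ i) = b ^ q ^ i), hq, frob_eval, ← hq, hb0]
        exact zero_pow (by positivity)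
  -- c and γ₀
  set c : F := g₂.eval 0 with hc
  have hg₁c : (g₁.map φ).eval (φ c) = 0 := by
    have : g₁.eval c = 0 := by rw [hcomp] at h0; rwa [eval_comp] at h0
    rw [evalφ, this, map_zero]
  have hβroot : (g.map φ).eval β = 0 := by
    apply (hgroots β).2
    right; exact ⟨0, by simp⟩
  set γ₀ : K := (g₂.map φ).eval β with hγ₀def
  have hγ₀root : (g₁.map φ).eval γ₀ = 0 := by
    have : (g.map φ) = (g₁.map φ).comp (g₂.map φ) := by rw [hcomp, map_comp]
    rw [this, eval_comp] at hβroot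
    exact hβroot
  have hsub : (g₂.map φ).eval 0 = φ c := by
    rw [← map_zero φ, evalφ, hc]
  -- orbit of γ₀ consists of roots of g₁
  have horb : ∀ j : ℕ, (g₁.map φ).eval (γ₀ ^ q ^ j) = 0 := by
    intro j
    rw [hq, frob_eval, ← hq, hγ₀root]
    exact zero_pow (by positivity)
  -- periodicity of γ₀ under Frobenius
  obtain ⟨d, hd1, hdper⟩ : ∃ d : ℕ, 1 ≤ d ∧ γ₀ ^ q ^ d = γ₀ := by
    have hg₁K : g₁.map φ ≠ 0 := by
      simpa using hg₁ne
    set T := (g₁.map φ).roots.toFinset with hT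
    have hmem : ∀ j : ℕ, γ₀ ^ q ^ j ∈ T := by
      intro j
      rw [hT, Multiset.mem_toFinset, mem_roots hg₁K]
      exact horb j
    obtain ⟨j, k, hjk, heq⟩ := Finite.exists_ne_map_eq_of_infinite
      (fun j : ℕ => (⟨γ₀ ^ q ^ j, hmem j⟩ : {x // x ∈ T}))
    simp only [Subtype.mk.injEq] at heq
    rcases Nat.lt_or_ge j k with hlt | hge
    · obtain ⟨d, rfl⟩ := Nat.exists_eq_add_of_lt hlt
      refine ⟨d + 1, by omega, ?_⟩
      apply frob_inj (F := F) j
      rw [← hq, ← pow_mul, ← pow_add]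
      have h' : d + 1 + j = j + d + 1 := by ring
      rw [h', ← heq]
    · have hlt : k < j := lt_of_le_of_ne hge (Ne.symm hjk)
      obtain ⟨d, rfl⟩ := Nat.exists_eq_add_of_lt hlt
      refine ⟨d + 1, by omega, ?_⟩
      apply frob_inj (F := F) k
      rw [← hq, ← pow_mul, ← pow_add]
      have h' : d + 1 + k = k + d + 1 := by ring
      rw [h', heq]
  have hper : ∀ m : ℕ, γ₀ ^ q ^ (d * m) = γ₀ := by
    intro m
    induction m with
    | zero => simp
    | succ m ih =>
      have : d * (m + 1) = d * m + d := by ring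
      rw [this, pow_add, pow_mul, ih, hdper]
  -- find a second root α₀ of g₂ - c
  set h : K[X] := g₂.map φ - C (φ c) with hh
  have hh0 : h.eval 0 = 0 := by simp [hh, hsub]
  obtain ⟨w, hw⟩ : X ∣ h := X_dvd_iff.2 (by rwa [coeff_zero_eq_eval_zero])
  have hhd : h.derivative.eval 0 = φ (g₂.derivative.eval 0) := by
    rw [hh]
    rw [derivative_sub, derivative_C, sub_zero, derivative_map, ← map_zero φ, evalφ]
  have hw0 : w.eval 0 ≠ 0 := by
    intro hwz
    apply hg₂d
    have : h.derivative.eval 0 = w.eval 0 := by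
      rw [hw, derivative_mul, derivative_X]
      simp
    rw [this, hwz] at hhd
    exact ((_root_.map_eq_zero φ).1 hhd.symm)
  have hwne : w ≠ 0 := fun e => hw0 (by simp [e])
  have hhdeg : h.natDegree = g₂.natDegree := by
    rw [hh, natDegree_sub_C, natDegree_map_eq_of_injective φ.injective]
  have hwdeg : 1 ≤ w.natDegree := by
    have : h.natDegree = 1 + w.natDegree := by
      rw [hw, natDegree_mul X_ne_zero hwne, natDegree_X]
    omega
  obtain ⟨α₀, hα₀⟩ := IsAlgClosed.exists_root w (by
    rw [degree_eq_natDegree hwne]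
    simp only [ne_eq, Nat.cast_eq_zero]
    omega)
  have hα₀ne : α₀ ≠ 0 := fun e => hw0 (by rwa [e] at hα₀)
  have hg₂α₀ : (g₂.map φ).eval α₀ = φ c := by
    have : h.eval α₀ = 0 := by rw [hw]; simp [hα₀.eq_zero]
    rw [hh] at this
    simp only [eval_sub, eval_C] at this
    exact sub_eq_zero.1 this
  have hgα₀ : (g.map φ).eval α₀ = 0 := by
    rw [hcomp, Polynomial.map_comp, eval_comp, hg₂α₀, hg₁c]
  have hγ₀ : γ₀ = φ c := by
    rcases (hgroots α₀).1 hgα₀ with rfl | ⟨i, hi⟩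
    · exact absurd rfl hα₀ne
    · have hci : γ₀ ^ q ^ i = φ c := by
        rw [hγ₀def, hq, ← frob_eval, ← hq, ← hi]
        exact hg₂α₀
      have hge : i ≤ d * (i + 1) := by nlinarith
      obtain ⟨s, hs⟩ := Nat.exists_eq_add_of_le hge
      calc γ₀ = γ₀ ^ q ^ (d * (i+1)) := (hper (i+1)).symm
        _ = (γ₀ ^ q ^ i) ^ q ^ s := by rw [← pow_mul, ← pow_add, ← hs]
        _ = φ (c ^ q ^ s) := by rw [hci, map_pow]
        _ = φ c := by rw [FiniteField.pow_card_pow]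
  have hg₁K : g₁.map φ ≠ 0 := by simpa using hg₁ne
  -- Step C : all roots of g₁ are φ c
  have hallroots : ∀ γ : K, (g₁.map φ).eval γ = 0 → γ = φ c := by
    intro γ hγ
    have hdeg : (g₂.map φ - C γ).natDegree = g₂.natDegree := by
      rw [natDegree_sub_C, natDegree_map_eq_of_injective φ.injective]
    have hne : (g₂.map φ - C γ) ≠ 0 := by
      intro e
      rw [e, natDegree_zero] at hdeg
      omega
    obtain ⟨α, hα⟩ := IsAlgClosed.exists_root (g₂.map φ - C γ) (by
      rw [degree_eq_natDegree hne, hdeg]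
      simp only [ne_eq, Nat.cast_eq_zero]
      omega)
    have hg₂α : (g₂.map φ).eval α = γ := by
      have := hα.eq_zero
      simp only [eval_sub, eval_C] at this
      exact sub_eq_zero.1 this
    have hgα : (g.map φ).eval α = 0 := by
      rw [hcomp, Polynomial.map_comp, eval_comp, hg₂α, hγ]
    rcases (hgroots α).1 hgα with rfl | ⟨i, hi⟩
    · rw [← hg₂α]
      exact hsub
    · rw [← hg₂α, hi, hq, frob_eval, ← hq, ← hγ₀def, hγ₀, ← map_pow,
        FiniteField.pow_card_pow]
  -- Step D : contradiction
  have hsp : Splits (g₁.map φ) := (IsAlgClosed.splits (g₁.map φ))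
  have hG₁ : g₁.map φ
      = C (g₁.map φ).leadingCoeff * (X - C (φ c)) ^ Multiset.card (g₁.map φ).roots := by
    have hprod := hsp.eq_prod_roots
    have hrepl : (g₁.map φ).roots.map (fun a => X - C a)
        = Multiset.replicate (Multiset.card (g₁.map φ).roots) (X - C (φ c)) := by
      refine Multiset.eq_replicate.2 ⟨by rw [Multiset.card_map], ?_⟩
      intro p hp
      obtain ⟨a, ha, rfl⟩ := Multiset.mem_map.1 hp
      rw [hallroots a ((mem_roots hg₁K).1 ha)]
    conv_lhs => rw [hprod]
    rw [hrepl, Multiset.prod_replicate]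
  have hcardroots : Multiset.card (g₁.map φ).roots = g₁.natDegree := by
    have h1 := hsp.natDegree_eq_card_roots
    rw [← h1, natDegree_map_eq_of_injective φ.injective]
  have hgmap : g.map φ
      = C (g₁.map φ).leadingCoeff * (g₂.map φ - C (φ c)) ^ Multiset.card (g₁.map φ).roots := by
    conv_lhs => rw [hcomp, Polynomial.map_comp, hG₁]
    simp [mul_comp, pow_comp, sub_comp, X_comp, C_comp]
  have hder : (derivative (g.map φ)).eval 0 = 0 := by
    rw [hgmap, derivative_C_mul, derivative_pow]
    simp only [eval_mul, eval_pow, eval_sub, eval_C, hsub, sub_self]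
    rw [zero_pow (by omega : Multiset.card (g₁.map φ).roots - 1 ≠ 0)]
    ring
  have hder' : (derivative (g.map φ)).eval 0 = φ (g.derivative.eval 0) := by
    rw [derivative_map, ← map_zero φ, evalφ]
  exact h0' ((_root_.map_eq_zero φ).1 (by rw [← hder', hder]))
end

section
/- Let n+1 be a prime not dividing q(q-1), let e ∈ F_q*, and let ζ be a primitive (n+1)-th root of unity over F_q. The set {−e(ζ^i − 1) : i = 1, …, n} forms a single orbit under the Frobenius map x ↦ x^q if and only if the multiplicative order of q modulo n+1 equals n. -/
open Polynomial

/-- for `n+1` a prime not dividing `q(q-1)`, `e ∈ F_q*`, and `ζ` a primitive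
`(n+1)`-th root of unity over `F_q`, the set `{−e(ζ^i − 1) : i = 1, …, n}` is a single
Frobenius orbit iff the multiplicative order of `q` modulo `n+1` equals `n`. -/
theorem stmt_3 {F : Type*} [Field F] [Fintype F] (q n : ℕ) (hq : Fintype.card F = q)
    (hprime : (n + 1).Prime) (hdvd : ¬ (n + 1) ∣ q * (q - 1))
    (e : F) (he : e ≠ 0) (ζ : AlgebraicClosure F) (hζ : IsPrimitiveRoot ζ (n + 1)) :
    IsSingleFrobeniusOrbit q
      {z : AlgebraicClosure F |
        ∃ i : ℕ, 1 ≤ i ∧ i ≤ n ∧ z = -(algebraMap F (AlgebraicClosure F) e) * (ζ ^ i - 1)}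
    ↔ orderOf (q : ZMod (n + 1)) = n := by
  haveI : Fact (n + 1).Prime := ⟨hprime⟩
  set A : AlgebraicClosure F := algebraMap F (AlgebraicClosure F) e with hAdef
  have hA0 : A ≠ 0 := by simpa [hAdef] using he
  set p := ringChar F with hpdef
  obtain ⟨k, hp, hcard⟩ := FiniteField.card F p
  haveI : Fact p.Prime := ⟨hp⟩
  have hqpk : q = p ^ (k : ℕ) := by rw [← hq, hcard]
  have hsub : ∀ x y : AlgebraicClosure F, (x - y) ^ q = x ^ q - y ^ q := by
    intro x y
    rw [hqpk]; exact sub_pow_char_pow x y k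
  have hAq : A ^ q = A := by
    rw [hAdef, ← map_pow, ← hq, FiniteField.pow_card]
  -- ζ-power depends only on residue mod n+1
  have hzmod : ∀ {i j : ℕ}, (i : ZMod (n + 1)) = (j : ZMod (n + 1)) → ζ ^ i = ζ ^ j := by
    intro i j hij
    have h : i % (n + 1) = j % (n + 1) := (ZMod.natCast_eq_natCast_iff i j (n + 1)).mp hij
    rw [hζ.eq_orderOf] at h
    rw [← pow_mod_orderOf, h, pow_mod_orderOf]
  set g : ZMod (n + 1) → AlgebraicClosure F := fun a => A - A * ζ ^ a.val with hg
  have hginj : Function.Injective g := by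
    intro a b hab
    simp only [hg] at hab
    have h1 : A * ζ ^ a.val = A * ζ ^ b.val := by linear_combination -hab
    have h2 : ζ ^ a.val = ζ ^ b.val := mul_left_cancel₀ hA0 h1
    exact ZMod.val_injective _ (hζ.pow_inj (ZMod.val_lt a) (ZMod.val_lt b) h2)
  have hgval : ∀ (i : ℕ), g (i : ZMod (n+1)) = A - A * ζ ^ i := by
    intro i
    simp only [hg]
    have h : ζ ^ ((i : ZMod (n+1)).val) = ζ ^ i :=
      hzmod (by rw [ZMod.natCast_val, ZMod.cast_id])
    rw [h]
  -- Frobenius action on g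
  have hfrob : ∀ (a : ZMod (n + 1)) (j : ℕ),
      g a ^ q ^ j = g (a * (q : ZMod (n+1)) ^ j) := by
    intro a j
    induction j with
    | zero => simp
    | succ j ih =>
      have hqe : (q : ℕ) ^ (j + 1) = q ^ j * q := by ring
      rw [hqe, pow_mul, ih]
      simp only [hg]
      rw [hsub, hAq, mul_pow, hAq, ← pow_mul]
      have h2 : ζ ^ ((a * (q:ZMod (n+1)) ^ j).val * q)
          = ζ ^ (a * (q:ZMod (n+1)) ^ (j+1)).val := by
        apply hzmod
        push_cast [ZMod.natCast_val, ZMod.cast_id]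
        ring
      rw [h2]
  -- the set S as an image of g
  have hS : {z : AlgebraicClosure F |
        ∃ i : ℕ, 1 ≤ i ∧ i ≤ n ∧ z = -(algebraMap F (AlgebraicClosure F) e) * (ζ ^ i - 1)}
      = g '' {a : ZMod (n+1) | a ≠ 0} := by
    ext z
    constructor
    · rintro ⟨i, hi1, hi2, rfl⟩
      refine ⟨(i : ZMod (n+1)), ?_, ?_⟩
      · simp only [Set.mem_setOf_eq, Ne, ZMod.natCast_eq_zero_iff]
        intro hcon
        have := Nat.le_of_dvd (by omega) hcon
        omega
      · rw [hgval i, ← hAdef]; ring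
    · rintro ⟨a, ha, rfl⟩
      refine ⟨a.val, ?_, ?_, ?_⟩
      · have : a.val ≠ 0 := fun h => ha (by rwa [ZMod.val_eq_zero] at h)
        omega
      · have := ZMod.val_lt a; omega
      · simp only [hg, ← hAdef]; ring
  have hn1 : 1 ≤ n := by have := hprime.two_le; omega
  have hcardu : Nat.card (ZMod (n + 1))ˣ = n := by
    rw [Nat.card_eq_fintype_card, ZMod.card_units_eq_totient, Nat.totient_prime hprime]
    omega
  rw [hS]
  constructor
  · rintro ⟨b, hb, hrange⟩
    obtain ⟨a0, ha0, rfl⟩ := hb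
    have hfun : (fun j : ℕ => g a0 ^ q ^ j)
        = g ∘ (fun j : ℕ => a0 * (q : ZMod (n+1)) ^ j) := funext (hfrob a0)
    have himg : g '' {a : ZMod (n+1) | a ≠ 0}
        = g '' Set.range (fun j : ℕ => a0 * (q : ZMod (n+1)) ^ j) := by
      rw [hrange, hfun, Set.range_comp]
    have hset : {a : ZMod (n+1) | a ≠ 0}
        = Set.range (fun j : ℕ => a0 * (q : ZMod (n+1)) ^ j) :=
      (Set.image_injective.mpr hginj) himg
    have hq0 : (q : ZMod (n+1)) ≠ 0 := by
      intro h
      have h1 : a0 * (q : ZMod (n+1)) ^ 1 ∈ {a : ZMod (n+1) | a ≠ 0} := by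
        rw [hset]; exact ⟨1, rfl⟩
      simp [h] at h1
    set u : (ZMod (n+1))ˣ := Units.mk0 _ hq0 with hu
    set v : (ZMod (n+1))ˣ := Units.mk0 _ ha0 with hv
    have hmem : ∀ x : (ZMod (n+1))ˣ, x ∈ Subgroup.zpowers u := by
      intro x
      have hne : ((v * x : (ZMod (n+1))ˣ) : ZMod (n+1)) ≠ 0 := Units.ne_zero _
      have hmem2 : ((v * x : (ZMod (n+1))ˣ) : ZMod (n+1))
          ∈ Set.range (fun j : ℕ => a0 * (q : ZMod (n+1)) ^ j) := by
        rw [← hset]; exact hne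
      obtain ⟨j, hj⟩ := hmem2
      have hj' : a0 * (q : ZMod (n+1)) ^ j = ((v * x : (ZMod (n+1))ˣ) : ZMod (n+1)) := hj
      have hxq : (q : ZMod (n+1)) ^ j = (x : ZMod (n+1)) := by
        have h5 : a0 * (q : ZMod (n+1)) ^ j = a0 * (x : ZMod (n+1)) := by
          rw [hj']; simp [hv]
        exact mul_left_cancel₀ ha0 h5
      have h6 : u ^ j = x := by
        ext
        rw [Units.val_pow_eq_pow_val, hu, Units.val_mk0, hxq]
      exact mem_powers_iff_mem_zpowers.mp ⟨j, h6⟩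
    have h7 := orderOf_eq_card_of_forall_mem_zpowers hmem
    rw [hcardu] at h7
    exact (orderOf_units (y := u)).trans h7
  · intro hord
    have hq0 : (q : ZMod (n+1)) ≠ 0 := by
      intro h
      have h1 : (q : ZMod (n+1)) ^ orderOf (q : ZMod (n+1)) = 1 :=
        pow_orderOf_eq_one _
      rw [hord, h, zero_pow (by omega)] at h1
      exact one_ne_zero h1.symm
    set u : (ZMod (n+1))ˣ := Units.mk0 _ hq0 with hu
    have hou : orderOf u = n := by
      rw [← orderOf_units]; exact hord
    have htop : Subgroup.zpowers u = ⊤ :=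
      Subgroup.eq_top_of_card_eq _ (by rw [Nat.card_zpowers, hou, hcardu])
    have hset : {a : ZMod (n+1) | a ≠ 0}
        = Set.range (fun j : ℕ => (q : ZMod (n+1)) ^ j) := by
      ext x
      constructor
      · intro hx
        have hzp : Units.mk0 x hx ∈ Subgroup.zpowers u := htop ▸ Subgroup.mem_top _
        obtain ⟨j, hj⟩ := mem_powers_iff_mem_zpowers.mpr hzp
        refine ⟨j, ?_⟩
        have h3 := congrArg Units.val hj
        simp only [Units.val_pow_eq_pow_val, hu, Units.val_mk0] at h3
        exact h3
      · rintro ⟨j, rfl⟩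
        exact pow_ne_zero _ hq0
    refine ⟨g 1, ⟨1, one_ne_zero, rfl⟩, ?_⟩
    have hfun : (fun j : ℕ => g 1 ^ q ^ j)
        = g ∘ (fun j : ℕ => (q : ZMod (n+1)) ^ j) := by
      funext j
      simpa using hfrob 1 j
    rw [hfun, Set.range_comp, hset]
end

section
/- Let n+1 be a prime with n+1 not dividing q(q²−1), let ζ be a primitive (n+1)-th root of unity over F_q, and set α_i = ζ^i + ζ^{-i} and β_i = ζ^i − ζ^{-i} for i = 1, …, n/2. If the multiplicative order of q modulo n+1 equals n/2, then β_i^{q^{n/2}} = β_i, while if the order equals n, then β_i^{q^{n/2}} = −β_i. -/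
/-- let `n+1` be a prime not dividing `q(q²−1)`, `ζ` a primitive `(n+1)`-th
root of unity over `F_q` (of odd characteristic), and `β_i = ζ^i − ζ^{-i}` for
`i = 1, …, n/2`. If the order of `q` modulo `n+1` is `n/2` then `β_i^{q^{n/2}} = β_i`,
while if it is `n` then `β_i^{q^{n/2}} = −β_i`. -/
theorem stmt_4 {F : Type*} [Field F] [Fintype F] (p q n : ℕ) [CharP F p] (hp : Odd p)
    (hq : Fintype.card F = q) (hprime : (n + 1).Prime)
    (hdvd : ¬ (n + 1) ∣ q * (q ^ 2 - 1))
    (ζ : AlgebraicClosure F) (hζ : IsPrimitiveRoot ζ (n + 1))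
    (i : ℕ) (hi1 : 1 ≤ i) (hi2 : i ≤ n / 2) :
    (orderOf (q : ZMod (n + 1)) = n / 2 → (ζ ^ i - ζ⁻¹ ^ i) ^ q ^ (n / 2) = ζ ^ i - ζ⁻¹ ^ i)
    ∧ (orderOf (q : ZMod (n + 1)) = n → (ζ ^ i - ζ⁻¹ ^ i) ^ q ^ (n / 2) = -(ζ ^ i - ζ⁻¹ ^ i)) := by
  have hppr : p.Prime := CharP.char_is_prime F p
  have : Fact p.Prime := ⟨hppr⟩
  obtain ⟨k, -, hcard⟩ := FiniteField.card F p
  have hqpk : q = p ^ (k : ℕ) := by rw [← hq, hcard]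
  have hqodd : Odd q := by rw [hqpk]; exact hp.pow
  have hq1 : 1 ≤ q := by rw [hqpk]; exact Nat.one_le_pow _ _ hppr.pos
  have hne2 : n + 1 ≠ 2 := by
    intro h
    apply hdvd
    rw [h]
    have : 2 ∣ q ^ 2 - 1 := by
      obtain ⟨m, hm⟩ := hqodd.pow (n := 2)
      omega
    exact Dvd.dvd.mul_left this q
  have hneven : 2 ∣ n := by
    rcases hprime.eq_two_or_odd' with h | h
    · omega
    · rcases h with ⟨m, hm⟩; omega
  have hnpos : 0 < n := by have := hprime.two_le; omega
  -- Frobenius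
  have hfrob : ∀ x y : AlgebraicClosure F,
      (x - y) ^ q ^ (n / 2) = x ^ q ^ (n / 2) - y ^ q ^ (n / 2) := by
    intro x y
    rw [hqpk, ← pow_mul]
    exact sub_pow_char_pow x y _
  have horder : orderOf ζ = n + 1 := (hζ.eq_orderOf).symm
  have hζpow : ∀ r : ℕ, ((q : ZMod (n + 1)) ^ (n / 2)) = (r : ZMod (n + 1)) →
      ζ ^ (q ^ (n / 2)) = ζ ^ r := by
    intro r h
    have hmod : q ^ (n / 2) % (n + 1) = r % (n + 1) :=
      (ZMod.natCast_eq_natCast_iff (q ^ (n / 2)) r (n + 1)).mp (by push_cast; exact h)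
    conv_lhs => rw [← pow_mod_orderOf]
    conv_rhs => rw [← pow_mod_orderOf]
    rw [horder, hmod]
  have hbeta : ∀ r : ℕ, ζ ^ (q ^ (n / 2)) = ζ ^ r →
      (ζ ^ i - ζ⁻¹ ^ i) ^ q ^ (n / 2) = (ζ ^ r) ^ i - ((ζ ^ r)⁻¹) ^ i := by
    intro r h
    have h2 : ζ⁻¹ ^ (q ^ (n / 2)) = (ζ ^ r)⁻¹ := by rw [inv_pow, h]
    rw [hfrob, ← pow_mul, ← pow_mul, mul_comm i, pow_mul, pow_mul, h, h2]
  constructor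
  · intro hord
    have h1 : (q : ZMod (n + 1)) ^ (n / 2) = 1 := by
      rw [← hord]; exact pow_orderOf_eq_one _
    have := hbeta 1 (hζpow 1 (by simpa using h1))
    simpa using this
  · intro hord
    haveI : Fact (n + 1).Prime := ⟨hprime⟩
    have hx2 : ((q : ZMod (n + 1)) ^ (n / 2)) * ((q : ZMod (n + 1)) ^ (n / 2)) = 1 := by
      rw [← pow_add]
      have h' : n / 2 + n / 2 = n := by omega
      have h1 := pow_orderOf_eq_one ((q : ZMod (n + 1)))
      rw [hord] at h1
      rw [h']
      exact h1
    have hxne1 : ((q : ZMod (n + 1)) ^ (n / 2)) ≠ 1 := by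
      intro h
      have hd := orderOf_dvd_of_pow_eq_one h
      rw [hord] at hd
      have := Nat.le_of_dvd (by omega) hd
      omega
    have hxneg : ((q : ZMod (n + 1)) ^ (n / 2)) = -1 := by
      rcases mul_self_eq_one_iff.mp hx2 with h | h
      · exact absurd h hxne1
      · exact h
    have hneg1 : ((n : ℕ) : ZMod (n + 1)) = -1 := by
      have h0 := ZMod.natCast_self (n + 1)
      push_cast at h0
      linear_combination h0
    have hz : ζ ^ (q ^ (n / 2)) = ζ ^ n := hζpow n (by rw [hxneg, hneg1])
    have hζn : ζ ^ n = ζ⁻¹ := by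
      have hne : ζ ≠ 0 := hζ.ne_zero (by omega)
      field_simp
      rw [← pow_succ]
      exact hζ.pow_eq_one
    have := hbeta n hz
    rw [hζn, inv_inv] at this
    rw [this]; ring
end

section
/- Let p be odd, q a power of p, and n+1 = p. Let r divide p−1 and k = (p−1)/r, and let a, e ∈ F_q* with a^{(q−1)/r} ≠ 1 (so e^r ≠ a). Fix u₀, v₀ in the algebraic closure of F_q with u₀^{p−1} = a and v₀^k = e. Then the p−1 elements (v₀ − λu₀)^k − e, for λ ranging over F_p*, are pairwise distinct. -/
/-- for `p` odd, `r ∣ p−1`, `k = (p−1)/r`, `a, e ∈ F_q*` with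
`a^{(q−1)/r} ≠ 1`, and `u₀^{p−1} = a`, `v₀^k = e` in an algebraic closure, the `p−1`
elements `(v₀ − λu₀)^k − e`, `λ ∈ F_p*`, are pairwise distinct. -/
theorem stmt_5 {F : Type*} [Field F] [Fintype F] (p r k : ℕ) [CharP F p] (hp : Odd p)
    (hpp : p.Prime) (hr : r ∣ p - 1) (hk : k = (p - 1) / r)
    (a e : F) (ha : a ≠ 0) (he : e ≠ 0) (ha' : a ^ ((Fintype.card F - 1) / r) ≠ 1)
    (u₀ v₀ : AlgebraicClosure F)
    (hu : u₀ ^ (p - 1) = algebraMap F (AlgebraicClosure F) a)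
    (hv : v₀ ^ k = algebraMap F (AlgebraicClosure F) e) :
    ∀ lam mu : ℕ, 1 ≤ lam → lam ≤ p - 1 → 1 ≤ mu → mu ≤ p - 1 →
      (v₀ - (lam : AlgebraicClosure F) * u₀) ^ k - algebraMap F (AlgebraicClosure F) e =
        (v₀ - (mu : AlgebraicClosure F) * u₀) ^ k - algebraMap F (AlgebraicClosure F) e →
      lam = mu := by
  intro lam mu hl1 hl2 hm1 hm2 heq
  let K := AlgebraicClosure F
  haveI : CharP K p := charP_of_injective_algebraMap (algebraMap F K).injective p
  haveI := Fact.mk hpp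
  have hp2 : 2 ≤ p := hpp.two_le
  have hp1 : 0 < p - 1 := by omega
  have hr0 : r ≠ 0 := by rintro rfl; simp at hr; omega
  have hkr : k * r = p - 1 := by rw [hk]; exact Nat.div_mul_cancel hr
  have hk0 : k ≠ 0 := by rintro rfl; simp at hkr; omega
  -- The key consequence of ha' : e^r ≠ a
  have hcontra : e ^ r ≠ a := by
    intro h
    apply ha'
    have hrq : r ∣ Fintype.card F - 1 := by
      obtain ⟨n, hcard⟩ := FiniteField.card F p
      have h1 : p - 1 ∣ p ^ (n : ℕ) - 1 ^ (n : ℕ) := Nat.sub_dvd_pow_sub_pow p 1 n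
      rw [one_pow] at h1
      rw [hcard.2]
      exact hr.trans h1
    calc a ^ ((Fintype.card F - 1) / r) = e ^ (r * ((Fintype.card F - 1) / r)) := by
          rw [pow_mul, h]
      _ = e ^ (Fintype.card F - 1) := by rw [Nat.mul_div_cancel' hrq]
      _ = 1 := FiniteField.pow_card_sub_one_eq_one e he
  have hu0 : u₀ ≠ 0 := by
    intro h
    apply ha
    apply (algebraMap F K).injective
    rw [← hu, h, zero_pow (by omega), map_zero]
  have hv0 : v₀ ≠ 0 := by
    intro h
    apply he
    apply (algebraMap F K).injective
    rw [← hv, h, zero_pow hk0, map_zero]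
  -- the master contradiction: if v₀ = c * u₀ with c a nonzero root of x^p = x, contradiction
  have final : ∀ c : K, c ≠ 0 → c ^ p = c → v₀ = c * u₀ → False := by
    intro c hc0 hcp hveq
    have hc1 : c ^ (p - 1) = 1 := by
      have h1 : c ^ (p - 1) * c = 1 * c := by
        rw [one_mul, ← pow_succ, show p - 1 + 1 = p by omega, hcp]
      exact mul_right_cancel₀ hc0 h1
    apply hcontra
    apply (algebraMap F K).injective
    calc algebraMap F K (e ^ r) = (v₀ ^ k) ^ r := by rw [map_pow, hv]
      _ = c ^ (k * r) * u₀ ^ (k * r) := by rw [hveq, ← pow_mul, mul_pow]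
      _ = algebraMap F K a := by rw [hkr, hc1, one_mul, hu]
  have hnatp : ∀ m : ℕ, 1 ≤ m → m ≤ p - 1 → ((m : K) ≠ 0 ∧ (m : K) ^ p = (m : K)) := by
    intro m h1 h2
    constructor
    · intro h
      have := (CharP.cast_eq_zero_iff K p m).mp h
      have := Nat.le_of_dvd (by omega) this
      omega
    · rw [← frobenius_def]
      exact map_natCast (frobenius K p) m
  -- nonvanishing of v₀ - m * u₀
  have key : ∀ m : ℕ, 1 ≤ m → m ≤ p - 1 → v₀ - (m : K) * u₀ ≠ 0 := by
    intro m h1 h2 h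
    obtain ⟨hm0, hmp⟩ := hnatp m h1 h2
    exact final (m : K) hm0 hmp (by linear_combination h)
  have hA := key lam hl1 hl2
  have hB := key mu hm1 hm2
  have hAB : (v₀ - (lam : K) * u₀) ^ k = (v₀ - (mu : K) * u₀) ^ k := by
    linear_combination heq
  set A := v₀ - (lam : K) * u₀ with hAdef
  set B := v₀ - (mu : K) * u₀ with hBdef
  set ζ := A / B with hζdef
  have hζk : ζ ^ k = 1 := by
    rw [hζdef, div_pow, hAB, div_self (pow_ne_zero _ hB)]
  have hζ1 : ζ ^ (p - 1) = 1 := by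
    rw [← hkr, pow_mul, hζk, one_pow]
  have hζp : ζ ^ p = ζ := by
    rw [show p = p - 1 + 1 by omega, pow_succ, hζ1, one_mul]
  have hAzB : A = ζ * B := by
    rw [hζdef, div_mul_cancel₀ _ hB]
  by_cases hζone : ζ = 1
  · -- then A = B, so lam = mu
    rw [hζone, one_mul] at hAzB
    have hcast : (lam : K) = (mu : K) := by
      have h1 : (lam : K) * u₀ = (mu : K) * u₀ := by
        rw [hAdef, hBdef] at hAzB
        linear_combination -hAzB
      exact mul_right_cancel₀ hu0 h1
    have := (CharP.natCast_eq_natCast K p).mp hcast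
    have hlp : lam % p = lam := Nat.mod_eq_of_lt (by omega)
    have hmp : mu % p = mu := Nat.mod_eq_of_lt (by omega)
    unfold Nat.ModEq at this
    omega
  · -- ζ ≠ 1 : solve for v₀
    exfalso
    have h1ζ : (1 : K) - ζ ≠ 0 := by
      intro h
      apply hζone
      have : (1 : K) = ζ := by linear_combination h
      exact this.symm
    set c : K := ((lam : K) - ζ * (mu : K)) / (1 - ζ) with hcdef
    have hveq : v₀ = c * u₀ := by
      rw [hcdef, div_mul_eq_mul_div, eq_div_iff h1ζ]
      linear_combination hAzB
    have hcp : c ^ p = c := by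
      have hnum : ((lam : K) - ζ * (mu : K)) ^ p = (lam : K) - ζ * (mu : K) := by
        calc ((lam : K) - ζ * (mu : K)) ^ p
            = frobenius K p ((lam : K) - ζ * (mu : K)) := (frobenius_def ..).symm
          _ = frobenius K p (lam : K) - frobenius K p ζ * frobenius K p (mu : K) := by
              rw [map_sub, map_mul]
          _ = (lam : K) - ζ * (mu : K) := by
              rw [map_natCast, map_natCast, frobenius_def, hζp]
      have hden : ((1 : K) - ζ) ^ p = (1 : K) - ζ := by
        calc ((1 : K) - ζ) ^ p = frobenius K p ((1 : K) - ζ) := (frobenius_def ..).symm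
          _ = frobenius K p 1 - frobenius K p ζ := by rw [map_sub]
          _ = (1 : K) - ζ := by rw [map_one, frobenius_def, hζp]
      rw [hcdef, div_pow, hnum, hden]
    have hc0 : c ≠ 0 := by
      intro h
      rw [h, zero_mul] at hveq
      exact hv0 hveq
    exact final c hc0 hcp hveq
end

section
/- Let p be odd, q a power of p, r | p−1, k = (p−1)/r, and a, e ∈ F_q* with a^{(q−1)/r} ≠ 1. Fix u₀, v₀ with u₀^{p−1} = a, v₀^k = e. The p−1 elements (v₀ − λu₀)^k − e (λ ∈ F_p*) form a single orbit under the Frobenius map x ↦ x^q if and only if the norm N_{F_q/F_p}(a/e^r) has multiplicative order p−1 in F_p*. -/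
/-- Any finset of `n`-th roots of unity of full size `n` contains every `n`-th root of unity. -/
lemma aux_cover_lemma {K : Type*} [Field K] {n : ℕ} (hn : 0 < n) (s : Finset K)
    (hs : ∀ y ∈ s, y ^ n = 1) (hcard : n ≤ s.card) {x : K} (hx : x ^ n = 1) : x ∈ s := by
  classical
  by_contra hxs
  have hsub : insert x s ⊆ (Polynomial.nthRoots n (1 : K)).toFinset := by
    intro y hy
    rw [Multiset.mem_toFinset, Polynomial.mem_nthRoots hn]
    rcases Finset.mem_insert.mp hy with h | h
    · rwa [h]
    · exact hs y h
  have h1 : (insert x s).card = s.card + 1 := Finset.card_insert_of_notMem hxs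
  have h2 := Finset.card_le_card hsub
  have h3 := Multiset.toFinset_card_le (Polynomial.nthRoots n (1 : K))
  have h4 := Polynomial.card_nthRoots n (1 : K)
  omega

lemma aux_cast_pow_eq_one {K : Type*} [Field K] {p : ℕ} [Fact p.Prime] [CharP K p]
    {l : ℕ} (h1 : 1 ≤ l) (h2 : l ≤ p - 1) : ((l : K)) ^ (p - 1) = 1 := by
  have hp := (Fact.out : p.Prime)
  have hlt : l < p := by have := hp.two_le; omega
  have hnz : (l : ZMod p) ≠ 0 := by
    rw [Ne, ZMod.natCast_eq_zero_iff]
    intro h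
    exact absurd (Nat.le_of_dvd (by omega) h) (by omega)
  have h5 : ((l : ZMod p)) ^ (p - 1) = 1 := ZMod.pow_card_sub_one_eq_one hnz
  have h6 := congrArg (ZMod.castHom (dvd_refl p) K) h5
  simpa using h6

lemma aux_cast_inj {K : Type*} [Field K] {p : ℕ} [Fact p.Prime] [CharP K p]
    {l m : ℕ} (hl : l < p) (hm : m < p) (h : (l : K) = (m : K)) : l = m := by
  have h2 : l ≡ m [MOD p] := (CharP.natCast_eq_natCast K p).mp h
  have h3 : l % p = m % p := h2
  rwa [Nat.mod_eq_of_lt hl, Nat.mod_eq_of_lt hm] at h3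

/-- with `p` odd, `r ∣ p−1`, `k = (p−1)/r`, `a, e ∈ F_q*`,
`a^{(q−1)/r} ≠ 1`, `u₀^{p−1} = a`, `v₀^k = e`, the `p−1` elements `(v₀ − λu₀)^k − e`
(`λ ∈ F_p*`) form a single Frobenius orbit iff the norm `N_{F_q/F_p}(a/e^r)`
(i.e. `(a/e^r)^{(q−1)/(p−1)}`) has multiplicative order `p−1`. -/
theorem stmt_6 {F : Type*} [Field F] [Fintype F] (p r k : ℕ) [CharP F p] (hp : Odd p)
    (hpp : p.Prime) (hr : r ∣ p - 1) (hk : k = (p - 1) / r)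
    (a e : F) (ha : a ≠ 0) (he : e ≠ 0) (ha' : a ^ ((Fintype.card F - 1) / r) ≠ 1)
    (u₀ v₀ : AlgebraicClosure F)
    (hu : u₀ ^ (p - 1) = algebraMap F (AlgebraicClosure F) a)
    (hv : v₀ ^ k = algebraMap F (AlgebraicClosure F) e) :
    IsSingleFrobeniusOrbit (Fintype.card F)
      {z : AlgebraicClosure F | ∃ lam : ℕ, 1 ≤ lam ∧ lam ≤ p - 1 ∧
        z = (v₀ - (lam : AlgebraicClosure F) * u₀) ^ k - algebraMap F (AlgebraicClosure F) e}
    ↔ orderOf ((a / e ^ r) ^ ((Fintype.card F - 1) / (p - 1))) = p - 1 := by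
  classical
  haveI : Fact p.Prime := ⟨hpp⟩
  haveI : CharP (AlgebraicClosure F) p :=
    charP_of_injective_algebraMap (algebraMap F (AlgebraicClosure F)).injective p
  set q := Fintype.card F with hq
  obtain ⟨n, -, hcard⟩ := FiniteField.card F p
  rw [← hq] at hcard
  have hq1 : 1 < q := Fintype.one_lt_card
  have hp2 : 2 ≤ p := hpp.two_le
  have hp1 : 0 < p - 1 := by omega
  have hrpos : 0 < r := Nat.pos_of_dvd_of_pos hr hp1
  have hrk : r * k = p - 1 := by rw [hk]; exact Nat.mul_div_cancel' hr
  have hkpos : 0 < k := by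
    rcases Nat.eq_zero_or_pos k with h | h
    · rw [h, mul_zero] at hrk; omega
    · exact h
  have hdvd : (p - 1) ∣ (q - 1) := by rw [hcard]; simpa using Nat.sub_dvd_pow_sub_pow p 1 (n : ℕ)
  have hrq : r ∣ q - 1 := hr.trans hdvd
  set m := (q - 1) / (p - 1) with hm
  have hm1 : (p - 1) * m = q - 1 := Nat.mul_div_cancel' hdvd
  have hqm : q = (p - 1) * m + 1 := by omega
  set E := algebraMap F (AlgebraicClosure F) e with hE
  set A₀ := algebraMap F (AlgebraicClosure F) a with hA
  set N : F := (a / e ^ r) ^ m with hN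
  set T := algebraMap F (AlgebraicClosure F) N with hT
  set g : AlgebraicClosure F → AlgebraicClosure F := fun x => (v₀ - x * u₀) ^ k - E with hg
  have hE0 : E ≠ 0 := by simp [hE, he]
  have hA0 : A₀ ≠ 0 := by simp [hA, ha]
  have hu0 : u₀ ≠ 0 := by
    intro h; apply hA0; rw [← hu, h, zero_pow (by omega)]
  have hv0 : v₀ ≠ 0 := by
    intro h; apply hE0; rw [← hv, h, zero_pow (by omega)]
  have hvp : v₀ ^ (p - 1) = E ^ r := by
    rw [← hrk, mul_comm r k, pow_mul, hv]
  have hrq' : r * ((q - 1) / r) = q - 1 := Nat.mul_div_cancel' hrq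
  have haer : a ≠ e ^ r := by
    intro h
    apply ha'
    rw [h, ← pow_mul, hrq']
    exact FiniteField.pow_card_sub_one_eq_one e he
  have hAE : A₀ ≠ E ^ r := by
    rw [hA, hE, ← map_pow]
    exact fun h => haer ((algebraMap F (AlgebraicClosure F)).injective h)
  -- the finset of nonzero scalars
  set μF : Finset (AlgebraicClosure F) :=
    (Finset.Icc 1 (p - 1)).image (fun l : ℕ => (l : AlgebraicClosure F)) with hμF
  have hμFcard : μF.card = p - 1 := by
    rw [hμF, Finset.card_image_of_injOn, Nat.card_Icc]
    · omega
    · intro x hx y hy hxy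
      simp only [Finset.coe_Icc, Set.mem_Icc] at hx hy
      refine aux_cast_inj (p := p) ?_ ?_ hxy <;> omega
  have hμFmem : ∀ y ∈ μF, y ^ (p - 1) = 1 := by
    intro y hy
    simp only [hμF, Finset.mem_image, Finset.mem_Icc] at hy
    obtain ⟨l, ⟨h1, h2⟩, rfl⟩ := hy
    exact aux_cast_pow_eq_one h1 h2
  have hμsurj : ∀ x : AlgebraicClosure F, x ^ (p - 1) = 1 →
      ∃ l : ℕ, 1 ≤ l ∧ l ≤ p - 1 ∧ x = (l : AlgebraicClosure F) := by
    intro x hx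
    have hmem := aux_cover_lemma hp1 μF hμFmem hμFcard.ge hx
    simp only [hμF, Finset.mem_image, Finset.mem_Icc] at hmem
    obtain ⟨l, ⟨h1, h2⟩, h⟩ := hmem
    exact ⟨l, h1, h2, h.symm⟩
  -- nonvanishing
  have hnz : ∀ x : AlgebraicClosure F, x ^ (p - 1) = 1 → v₀ - x * u₀ ≠ 0 := by
    intro x hx h
    have hveq : v₀ = x * u₀ := by linear_combination h
    apply hAE
    rw [← hvp, hveq, mul_pow, hx, one_mul, hu]
  -- injectivity of the parametrization
  have hginj : ∀ x y : AlgebraicClosure F,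
      x ^ (p - 1) = 1 → y ^ (p - 1) = 1 → g x = g y → x = y := by
    intro x y hx hy hgxy
    have hk' : (v₀ - x * u₀) ^ k = (v₀ - y * u₀) ^ k := by
      have := hgxy
      simp only [hg, sub_left_inj] at this
      exact this
    set ζ : AlgebraicClosure F := (v₀ - x * u₀) / (v₀ - y * u₀) with hζ
    have hζk : ζ ^ k = 1 := by
      rw [hζ, div_pow, hk', div_self (pow_ne_zero _ (hnz y hy))]
    have hζp : ζ ^ (p - 1) = 1 := by rw [← hrk, mul_comm r k, pow_mul, hζk, one_pow]
    have hζv : v₀ - x * u₀ = ζ * (v₀ - y * u₀) := by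
      rw [hζ, div_mul_cancel₀ _ (hnz y hy)]
    by_cases hζ1 : ζ = 1
    · rw [hζ1, one_mul] at hζv
      have hxy : x * u₀ = y * u₀ := by linear_combination -hζv
      exact mul_right_cancel₀ hu0 hxy
    · exfalso
      have h1ζ : (1 : AlgebraicClosure F) - ζ ≠ 0 := sub_ne_zero.mpr (Ne.symm hζ1)
      have hveq : (1 - ζ) * v₀ = (x - ζ * y) * u₀ := by linear_combination hζv
      set s : AlgebraicClosure F := (x - ζ * y) / (1 - ζ) with hs
      have hsv : v₀ = s * u₀ := by
        rw [hs, div_mul_eq_mul_div, ← hveq, mul_div_cancel_left₀ _ h1ζ]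
      have hxp : x ^ p = x := by
        rw [show p = (p - 1) + 1 from by omega, pow_succ, hx, one_mul]
      have hyp : y ^ p = y := by
        rw [show p = (p - 1) + 1 from by omega, pow_succ, hy, one_mul]
      have hζpp : ζ ^ p = ζ := by
        rw [show p = (p - 1) + 1 from by omega, pow_succ, hζp, one_mul]
      have h1p : (1 : AlgebraicClosure F) ^ p = 1 := one_pow p
      have hsp : s ^ p = s := by
        rw [hs, div_pow, sub_pow_char, sub_pow_char, mul_pow, hxp, hyp, hζpp, h1p]
      have hs0 : s ≠ 0 := by
        intro h0; rw [h0, zero_mul] at hsv; exact hv0 hsv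
      have hsp1 : s ^ (p - 1) = 1 := by
        have hss : s * s ^ (p - 1) = s * 1 := by
          rw [mul_one, ← pow_succ', show (p - 1) + 1 = p from by omega, hsp]
        exact mul_left_cancel₀ hs0 hss
      apply hAE
      rw [← hvp, hsv, mul_pow, hsp1, one_mul, hu]
  -- Frobenius action on parameters
  have haee : a / e ^ r ≠ 0 := div_ne_zero ha (pow_ne_zero _ he)
  have hNpow : N ^ (p - 1) = 1 := by
    rw [hN, ← pow_mul, mul_comm m (p - 1), hm1]
    exact FiniteField.pow_card_sub_one_eq_one _ haee
  have hN0 : N ≠ 0 := pow_ne_zero _ haee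
  have hT1 : T ^ (p - 1) = 1 := by rw [hT, ← map_pow, hNpow, map_one]
  have hxq : ∀ x : AlgebraicClosure F, x ^ (p - 1) = 1 → x ^ q = x := by
    intro x hx
    rw [hqm, pow_add, pow_mul, hx, one_pow, one_mul, pow_one]
  have huq : u₀ ^ q = A₀ ^ m * u₀ := by rw [hqm, pow_add, pow_mul, hu, pow_one]
  have hvq : v₀ ^ q = (E ^ r) ^ m * v₀ := by rw [hqm, pow_add, pow_mul, hvp, pow_one]
  have hTm : T = A₀ ^ m / (E ^ r) ^ m := by
    rw [hT, hN, hA, hE, map_pow, map_div₀, map_pow, div_pow]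
  have hErm0 : ((E ^ r) ^ m) ≠ 0 := pow_ne_zero _ (pow_ne_zero _ hE0)
  have hEq : E ^ q = E := by rw [hE, ← map_pow, FiniteField.pow_card]
  have hErk : (((E ^ r) ^ m) ^ k) = 1 := by
    rw [← pow_mul, ← pow_mul,
      show r * (m * k) = q - 1 from by rw [show r * (m * k) = r * k * m from by ring, hrk, hm1]]
    rw [hE, ← map_pow, FiniteField.pow_card_sub_one_eq_one e he, map_one]
  have hfrob : ∀ x : AlgebraicClosure F, x ^ (p - 1) = 1 → (g x) ^ q = g (T * x) := by
    intro x hx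
    have step1 : ((v₀ - x * u₀) ^ k - E) ^ q = ((v₀ - x * u₀) ^ k) ^ q - E ^ q := by
      rw [hcard]; exact sub_pow_char_pow _ _ _
    have step2 : (v₀ - x * u₀) ^ q = (E ^ r) ^ m * (v₀ - T * x * u₀) := by
      have hsub : (v₀ - x * u₀) ^ q = v₀ ^ q - (x * u₀) ^ q := by
        rw [hcard]; exact sub_pow_char_pow _ _ _
      rw [hsub, mul_pow, hxq x hx, hvq, huq, hTm]
      field_simp
    show ((v₀ - x * u₀) ^ k - E) ^ q = (v₀ - T * x * u₀) ^ k - E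
    rw [step1, pow_right_comm, step2, mul_pow, hErk, one_mul, hEq]
  -- iterate the Frobenius
  have hiter : ∀ x : AlgebraicClosure F, x ^ (p - 1) = 1 →
      ∀ i : ℕ, (g x) ^ (q ^ i) = g (T ^ i * x) ∧ (T ^ i * x) ^ (p - 1) = 1 := by
    intro x hx i
    induction i with
    | zero => simp [hx]
    | succ i ih =>
      obtain ⟨h1, h2⟩ := ih
      constructor
      · rw [pow_succ, pow_mul, h1, hfrob _ h2, ← mul_assoc, ← pow_succ']
      · rw [mul_pow, pow_right_comm, hT1, one_pow, hx, one_mul]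
  -- bridge between the two descriptions of the set
  have hSiff : ∀ z : AlgebraicClosure F,
      (∃ lam : ℕ, 1 ≤ lam ∧ lam ≤ p - 1 ∧
        z = (v₀ - (lam : AlgebraicClosure F) * u₀) ^ k - E) ↔
      (∃ x : AlgebraicClosure F, x ^ (p - 1) = 1 ∧ z = g x) := by
    intro z
    constructor
    · rintro ⟨l, h1, h2, rfl⟩
      exact ⟨(l : AlgebraicClosure F), aux_cast_pow_eq_one h1 h2, rfl⟩
    · rintro ⟨x, hx, rfl⟩
      obtain ⟨l, h1, h2, rfl⟩ := hμsurj x hx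
      exact ⟨l, h1, h2, rfl⟩
  have horder : orderOf T = orderOf N :=
    orderOf_injective (algebraMap F (AlgebraicClosure F)).toMonoidHom
      (algebraMap F (AlgebraicClosure F)).injective N
  rw [IsSingleFrobeniusOrbit]
  constructor
  · rintro ⟨b, hbS, hbrange⟩
    obtain ⟨x₀, hx₀, rfl⟩ := (hSiff b).mp hbS
    have hcover : ∀ x : AlgebraicClosure F, x ^ (p - 1) = 1 → ∃ i : ℕ, x = T ^ i * x₀ := by
      intro x hx
      have hgx : g x ∈ Set.range fun i : ℕ => (g x₀) ^ q ^ i := by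
        rw [← hbrange]
        exact (hSiff _).mpr ⟨x, hx, rfl⟩
      obtain ⟨i, hi⟩ := hgx
      have hi' : g x₀ ^ q ^ i = g x := hi
      have hit := hiter x₀ hx₀ i
      rw [hit.1] at hi'
      exact ⟨i, (hginj _ _ hit.2 hx hi').symm⟩
    have hTfin : IsOfFinOrder T := isOfFinOrder_iff_pow_eq_one.mpr ⟨p - 1, hp1, hT1⟩
    have hordpos : 0 < orderOf T := hTfin.orderOf_pos
    have hsubset : μF ⊆ (Finset.range (orderOf T)).image (fun i => T ^ i * x₀) := by
      intro y hy
      obtain ⟨i, hi⟩ := hcover y (hμFmem y hy)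
      refine Finset.mem_image.mpr ⟨i % orderOf T, Finset.mem_range.mpr (Nat.mod_lt _ hordpos), ?_⟩
      show T ^ (i % orderOf T) * x₀ = y
      rw [pow_mod_orderOf, ← hi]
    have hle : p - 1 ≤ orderOf T := by
      calc p - 1 = μF.card := hμFcard.symm
        _ ≤ ((Finset.range (orderOf T)).image (fun i => T ^ i * x₀)).card :=
            Finset.card_le_card hsubset
        _ ≤ (Finset.range (orderOf T)).card := Finset.card_image_le
        _ = orderOf T := Finset.card_range _
    have hdvd' : orderOf T ∣ p - 1 := orderOf_dvd_of_pow_eq_one hT1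
    rw [← horder]
    exact le_antisymm (Nat.le_of_dvd hp1 hdvd') hle
  · intro hord
    have hordT : orderOf T = p - 1 := by rw [horder]; exact hord
    refine ⟨g 1, (hSiff _).mpr ⟨1, one_pow _, rfl⟩, ?_⟩
    ext z
    simp only [Set.mem_range, Set.mem_setOf_eq]
    constructor
    · intro hz
      obtain ⟨x, hx, rfl⟩ := (hSiff z).mp hz
      have hTpow : ∀ i : ℕ, (T ^ i) ^ (p - 1) = 1 := fun i => by
        rw [pow_right_comm, hT1, one_pow]
      have hTFcard : ((Finset.range (p - 1)).image (fun i => T ^ i)).card = p - 1 := by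
        rw [Finset.card_image_of_injOn, Finset.card_range]
        intro i hi j hj hij
        refine pow_injOn_Iio_orderOf ?_ ?_ hij
        · simp only [Finset.coe_range, Set.mem_Iio] at hi ⊢
          omega
        · simp only [Finset.coe_range, Set.mem_Iio] at hj ⊢
          omega
      have hxTF : x ∈ (Finset.range (p - 1)).image (fun i => T ^ i) := by
        refine aux_cover_lemma hp1 _ ?_ hTFcard.ge hx
        intro y hy
        obtain ⟨i, -, rfl⟩ := Finset.mem_image.mp hy
        exact hTpow i
      obtain ⟨i, -, rfl⟩ := Finset.mem_image.mp hxTF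
      exact ⟨i, by rw [(hiter 1 (one_pow _) i).1, mul_one]⟩
    · rintro ⟨i, rfl⟩
      have h1 := hiter 1 (one_pow _) i
      exact (hSiff _).mpr ⟨T ^ i * 1, h1.2, h1.1⟩
end

section
/- Let q = p^m and L(x) = x^{p^r} − c·x ∈ F_q[x], where c is a generator of F_q* and r divides m. Then the polynomial h(x) = x^{p^r − 1} − c is irreducible over F_q; equivalently, the nonzero roots of L form a single orbit under the Frobenius map x ↦ x^q. -/
open Polynomial IntermediateField

lemma aux_dvd {q N d : ℕ} (hq : 2 ≤ q) (hNq : N ∣ q - 1) (h : (q - 1) * N ∣ q ^ d - 1) :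
    N ∣ d := by
  have hq1 : 1 ≤ q := by omega
  have hqd : 1 ≤ q ^ d := Nat.one_le_pow _ _ (by omega)
  have hZ : ((q : ℤ) - 1) * N ∣ (q : ℤ) ^ d - 1 := by
    have := Int.natCast_dvd_natCast.mpr h
    push_cast [Nat.cast_sub hq1, Nat.cast_sub hqd] at this
    exact_mod_cast this
  have hNqZ : (N : ℤ) ∣ (q : ℤ) - 1 := by
    have := Int.natCast_dvd_natCast.mpr hNq
    push_cast [Nat.cast_sub hq1] at this
    exact_mod_cast this
  set S : ℤ := ∑ i ∈ Finset.range d, (q : ℤ) ^ i with hS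
  have hgeom : ((q : ℤ) - 1) * S = (q : ℤ) ^ d - 1 := by
    rw [hS, mul_comm]
    simpa using geom_sum_mul (q : ℤ) d
  have hNS : (N : ℤ) ∣ S := by
    rcases hZ with ⟨k, hk⟩
    rw [← hgeom, mul_assoc] at hk
    have hq1' : (q : ℤ) - 1 ≠ 0 := by
      have : (2 : ℤ) ≤ q := by exact_mod_cast hq
      omega
    exact ⟨k, mul_left_cancel₀ hq1' hk⟩
  have hSd : (N : ℤ) ∣ S - d := by
    have : S - d = ∑ i ∈ Finset.range d, ((q : ℤ) ^ i - 1) := by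
      rw [hS, Finset.sum_sub_distrib]; simp
    rw [this]
    exact Finset.dvd_sum fun i _ =>
      hNqZ.trans (by simpa using sub_dvd_pow_sub_pow (q : ℤ) 1 i)
  have : (N : ℤ) ∣ (d : ℤ) := by simpa using dvd_sub hNS hSd
  exact_mod_cast this

lemma aux_irred {F : Type*} [Field F] [Fintype F] {N : ℕ} (hNpos : 0 < N)
    (hNq : N ∣ Fintype.card F - 1) {c : F}
    (hordc : orderOf c = Fintype.card F - 1) :
    Irreducible (X ^ N - C c : F[X]) := by
  classical
  have hq2 : 2 ≤ Fintype.card F := Fintype.one_lt_card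
  have hc0 : c ≠ 0 := by
    rintro rfl
    have h1 := pow_orderOf_eq_one (0 : F)
    rw [hordc, zero_pow (by omega : Fintype.card F - 1 ≠ 0)] at h1
    exact zero_ne_one h1
  have hhne : (X ^ N - C c : F[X]) ≠ 0 := X_pow_sub_C_ne_zero hNpos c
  have hhdeg : (X ^ N - C c : F[X]).natDegree = N := natDegree_X_pow_sub_C
  set E := (X ^ N - C c : F[X]).SplittingField with hE
  haveI : Finite E := Module.finite_of_finite F
  haveI : Fintype E := Fintype.ofFinite E
  obtain ⟨α, hα⟩ := Splits.exists_eval_eq_zero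
    (SplittingField.splits (X ^ N - C c : F[X]))
    (by rw [degree_map, degree_X_pow_sub_C hNpos]
        exact_mod_cast Nat.pos_iff_ne_zero.mp hNpos)
  have hαN : α ^ N = algebraMap F E c := by
    simp only [eval_map, eval₂_sub, eval₂_pow, eval₂_X, eval₂_C, sub_eq_zero] at hα
    exact hα
  have hα0 : α ≠ 0 := by
    intro h0
    rw [h0, zero_pow (by omega : N ≠ 0)] at hαN
    exact hc0 ((_root_.map_eq_zero (algebraMap F E)).mp hαN.symm)
  have hordc' : orderOf (algebraMap F E c) = Fintype.card F - 1 := by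
    exact (orderOf_injective (algebraMap F E).toMonoidHom (algebraMap F E).injective c).trans hordc
  have hkey : Fintype.card F - 1 = orderOf α / Nat.gcd (orderOf α) N := by
    rw [← hordc', ← hαN]; exact orderOf_pow' α (by omega : N ≠ 0)
  have hgcd_dvd : Nat.gcd (orderOf α) N ∣ orderOf α := Nat.gcd_dvd_left _ _
  have hordα : (Fintype.card F - 1) * Nat.gcd (orderOf α) N = orderOf α := by
    rw [hkey, Nat.div_mul_cancel hgcd_dvd]
  have hNordα : N ∣ orderOf α :=
    hNq.trans ⟨Nat.gcd (orderOf α) N, hordα.symm⟩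
  have hgcdN : Nat.gcd (orderOf α) N = N := Nat.gcd_eq_right hNordα
  rw [hgcdN] at hordα
  have hint : IsIntegral F α := IsIntegral.of_finite F α
  have haev : (Polynomial.aeval α) (X ^ N - C c : F[X]) = 0 := by
    simp [hαN]
    exact sub_self _
  have hdvd : minpoly F α ∣ (X ^ N - C c : F[X]) := minpoly.dvd F α haev
  set d := (minpoly F α).natDegree with hd
  have hpow : α ^ (Fintype.card F ^ d) = α := by
    have hfin : Module.finrank F F⟮α⟯ = d := IntermediateField.adjoin.finrank hint
    haveI : Fintype F⟮α⟯ := Fintype.ofFinite _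
    have hcardK : Fintype.card F⟮α⟯ = Fintype.card F ^ d := by
      rw [Module.card_eq_pow_finrank (K := F) (V := F⟮α⟯), hfin]
    have h1 := FiniteField.pow_card (IntermediateField.AdjoinSimple.gen F α)
    rw [hcardK] at h1
    have h2 := congrArg (algebraMap F⟮α⟯ E) h1
    rwa [map_pow, IntermediateField.AdjoinSimple.algebraMap_gen] at h2
  have hqd1 : 1 ≤ Fintype.card F ^ d := Nat.one_le_pow _ _ (by omega)
  have hpow1 : α ^ (Fintype.card F ^ d - 1) = 1 := by
    have h3 : α ^ (Fintype.card F ^ d - 1) * α = 1 * α := by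
      rw [one_mul, ← pow_succ, Nat.sub_add_cancel hqd1, hpow]
    exact mul_right_cancel₀ hα0 h3
  have hdvd2 : (Fintype.card F - 1) * N ∣ Fintype.card F ^ d - 1 := by
    rw [hordα]
    exact orderOf_dvd_of_pow_eq_one hpow1
  have hNd : N ∣ d := aux_dvd hq2 hNq hdvd2
  have hdpos : 0 < d := minpoly.natDegree_pos hint
  have hNled : N ≤ d := Nat.le_of_dvd hdpos hNd
  exact (associated_of_dvd_of_natDegree_le hdvd hhne (hhdeg.trans_le hNled)).irreducible
    (minpoly.irreducible hint)

/-- let `q = p^m`, `c` a generator of `F_q*`, and `r ∣ m`. Then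
`x^{p^r − 1} − c` is irreducible over `F_q` (equivalently, the nonzero roots of
`L(x) = x^{p^r} − cx` form a single Frobenius orbit). -/
theorem stmt_8 {F : Type*} [Field F] [Fintype F] (p m r : ℕ) [CharP F p] (hpp : p.Prime)
    (hcard : Fintype.card F = p ^ m) (hr : 1 ≤ r) (hrm : r ∣ m)
    (c : F) (hc : ∀ x : F, x ≠ 0 → ∃ i : ℕ, c ^ i = x) :
    Irreducible (X ^ (p ^ r - 1) - C c : F[X]) := by
  classical
  have hp2 : 2 ≤ p := hpp.two_le
  have hNpos : 0 < p ^ r - 1 := by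
    have : 2 ≤ p ^ r := le_trans hp2 (Nat.le_self_pow (by omega) p)
    omega
  have hq2 : 2 ≤ Fintype.card F := Fintype.one_lt_card
  have hNq : p ^ r - 1 ∣ Fintype.card F - 1 := by
    obtain ⟨k, hk⟩ := hrm
    rw [hcard, hk, pow_mul]
    simpa using Nat.sub_dvd_pow_sub_pow (p ^ r) 1 k
  by_cases hN1 : p ^ r - 1 = 1
  · rw [hN1, pow_one]
    exact irreducible_X_sub_C c
  have hq3 : 3 ≤ Fintype.card F := by
    have := Nat.le_of_dvd (by omega) hNq
    omega
  have hc0 : c ≠ 0 := by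
    rintro rfl
    have hsub : (Finset.univ : Finset F) ⊆ {0, 1} := by
      intro x _
      rcases eq_or_ne x 0 with rfl | hx
      · simp
      · obtain ⟨i, hi⟩ := hc x hx
        rcases Nat.eq_zero_or_pos i with rfl | hi'
        · simp only [pow_zero] at hi
          simp [← hi]
        · rw [zero_pow (by omega)] at hi; exact absurd hi.symm hx
    have h4 := Finset.card_le_card hsub
    have h5 : ({0, 1} : Finset F).card ≤ 2 :=
      (Finset.card_insert_le _ _).trans (by simp)
    rw [Finset.card_univ] at h4
    omega
  have hordc : orderOf c = Fintype.card F - 1 := by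
    set cu : Fˣ := Units.mk0 c hc0 with hcu
    have hmem : ∀ x : Fˣ, x ∈ Subgroup.zpowers cu := by
      intro x
      obtain ⟨i, hi⟩ := hc (x : F) x.ne_zero
      refine ⟨(i : ℤ), ?_⟩
      ext
      push_cast
      simpa [hcu] using hi
    calc orderOf c = orderOf (cu : F) := by rw [hcu, Units.val_mk0]
      _ = orderOf cu := orderOf_units
      _ = Nat.card Fˣ := orderOf_eq_card_of_forall_mem_zpowers hmem
      _ = Fintype.card F - 1 := by rw [Nat.card_eq_fintype_card, Fintype.card_units]
  exact aux_irred hNpos hNq hordc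
end

section
/- Let q = p^m, and let N = p^r − 1 divide q − 1. Let ω be a primitive element of F_{q^N} and η = ω^{(q^N−1)/(N(q−1))}. If η ∈ F_{q^k} for some divisor k of N, then k = N. -/
private lemma auxS (q N k : ℕ) (hq : 1 ≤ q) (h : N ∣ q - 1) :
    (N:ℤ) ∣ (∑ i ∈ Finset.range k, (q:ℤ)^i) - k := by
  have hN : (N:ℤ) ∣ (q:ℤ) - 1 := by
    have := Int.natCast_dvd_natCast.mpr h
    rwa [Nat.cast_sub hq] at this
  have heq : (∑ i ∈ Finset.range k, (q:ℤ)^i) - k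
      = ∑ i ∈ Finset.range k, ((q:ℤ)^i - 1) := by
    rw [Finset.sum_sub_distrib]; simp
  rw [heq]
  exact Finset.dvd_sum fun i _ =>
    hN.trans (by simpa using sub_dvd_pow_sub_pow (q:ℤ) 1 i)

private lemma aux1 (q N : ℕ) (hq : 1 ≤ q) (h : N ∣ q - 1) :
    N * (q - 1) ∣ q ^ N - 1 := by
  have hS : (N:ℤ) ∣ ∑ i ∈ Finset.range N, (q:ℤ)^i := by
    have h1 := auxS q N N hq h
    have : (∑ i ∈ Finset.range N, (q:ℤ)^i)
        = ((∑ i ∈ Finset.range N, (q:ℤ)^i) - N) + N := by ring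
    rw [this]
    exact dvd_add h1 (dvd_refl _)
  have hZ : (N:ℤ) * ((q:ℤ) - 1) ∣ (q:ℤ)^N - 1 := by
    rw [← geom_sum_mul (q:ℤ) N]
    exact mul_dvd_mul hS (dvd_refl _)
  have hq' : 1 ≤ q ^ N := Nat.one_le_pow _ _ hq
  have : ((N * (q-1) : ℕ) : ℤ) ∣ ((q ^ N - 1 : ℕ) : ℤ) := by
    push_cast [Nat.cast_sub hq, Nat.cast_sub hq']
    exact hZ
  exact_mod_cast this

private lemma aux2 (q N k : ℕ) (hq : 2 ≤ q) (h : N ∣ q - 1)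
    (hd : N * (q - 1) ∣ q ^ k - 1) : N ∣ k := by
  have hq1 : 1 ≤ q := by omega
  have hq' : 1 ≤ q ^ k := Nat.one_le_pow _ _ hq1
  have hZ : (N:ℤ) * ((q:ℤ) - 1) ∣ (q:ℤ)^k - 1 := by
    have := Int.natCast_dvd_natCast.mpr hd
    push_cast [Nat.cast_sub hq1, Nat.cast_sub hq'] at this
    exact this
  rw [← geom_sum_mul (q:ℤ) k] at hZ
  have hqne : (q:ℤ) - 1 ≠ 0 := by
    have : (2:ℤ) ≤ (q:ℤ) := by exact_mod_cast hq
    omega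
  have hS : (N:ℤ) ∣ ∑ i ∈ Finset.range k, (q:ℤ)^i :=
    (mul_dvd_mul_iff_right hqne).mp hZ
  have hSk := auxS q N k hq1 h
  have : (N:ℤ) ∣ (k:ℤ) := by
    have : (k:ℤ) = (∑ i ∈ Finset.range k, (q:ℤ)^i)
        - ((∑ i ∈ Finset.range k, (q:ℤ)^i) - k) := by ring
    rw [this]
    exact dvd_sub hS hSk
  exact_mod_cast this

/-- let `q = p^m`, `N = p^r − 1` divide `q − 1`, `ω` a primitive element
of `F_{q^N}` and `η = ω^{(q^N−1)/(N(q−1))}`. If `η ∈ F_{q^k}` for a divisor `k` of `N`,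
then `k = N`. -/
theorem stmt_9 {E : Type*} [Field E] [Fintype E] (p m r q N : ℕ) (hpp : p.Prime)
    (hq : q = p ^ m) (hm : 1 ≤ m) (hN : N = p ^ r - 1) (hr : 1 ≤ r)
    (hNq : N ∣ q - 1) (hcard : Fintype.card E = q ^ N)
    (ω : E) (hω : ∀ x : E, x ≠ 0 → ∃ i : ℕ, ω ^ i = x)
    (η : E) (hη : η = ω ^ ((q ^ N - 1) / (N * (q - 1))))
    (k : ℕ) (hk : k ∣ N) (hsub : η ^ q ^ k = η) :
    k = N := by
  classical
  have hp2 : 2 ≤ p := hpp.two_le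
  have hq2 : 2 ≤ q := by
    rw [hq]
    calc 2 = 2 ^ 1 := rfl
    _ ≤ p ^ m := Nat.pow_le_pow_left hp2 m |>.trans' (Nat.pow_le_pow_right (by omega) hm)
  have hN1 : 1 ≤ N := by
    have : 2 ≤ p ^ r := by
      calc 2 = 2 ^ 1 := rfl
      _ ≤ p ^ r := (Nat.pow_le_pow_left hp2 r).trans' (Nat.pow_le_pow_right (by omega) hr)
    omega
  -- case N = 1
  rcases Nat.lt_or_ge N 2 with h2 | hN2
  · have : N = 1 := by omega
    subst this
    exact Nat.dvd_one.mp hk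
  -- N ≥ 2, so card E ≥ 4 > 2
  have hcard3 : 2 < Fintype.card E := by
    rw [hcard]
    calc 2 < 2 ^ 2 := by norm_num
    _ ≤ q ^ N := Nat.pow_le_pow_left hq2 N |>.trans' (Nat.pow_le_pow_right (by norm_num) hN2)
  -- ω ≠ 0
  have hω0 : ω ≠ 0 := by
    intro h0
    have hsub2 : (Finset.univ : Finset E) ⊆ {0, 1} := by
      intro x _
      by_cases hx : x = 0
      · simp [hx]
      · obtain ⟨i, hi⟩ := hω x hx
        rcases Nat.eq_zero_or_pos i with hi0 | hip
        · simp [hi0] at hi; simp [← hi]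
        · rw [h0, zero_pow (by omega)] at hi
          exact absurd hi.symm hx
    have := Finset.card_le_card hsub2
    have h01 : ({0, 1} : Finset E).card ≤ 2 := Finset.card_insert_le _ _ |>.trans (by simp)
    rw [Finset.card_univ] at this
    omega
  -- ω is a generator of the unit group, so orderOf ω = q^N - 1
  set u : Eˣ := Units.mk0 ω hω0 with hu
  have hgen : ∀ v : Eˣ, v ∈ Subgroup.zpowers u := by
    intro v
    obtain ⟨i, hi⟩ := hω (v : E) (Units.ne_zero v)
    refine ⟨(i : ℤ), ?_⟩
    show u ^ (i : ℤ) = v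
    rw [zpow_natCast]
    ext
    push_cast [hu]
    exact hi
  have hordu : orderOf u = q ^ N - 1 := by
    rw [orderOf_eq_card_of_forall_mem_zpowers hgen, Nat.card_eq_fintype_card, Fintype.card_units, hcard]
  have hordω : orderOf ω = q ^ N - 1 := by
    rw [← hordu, ← orderOf_units]
    rfl
  -- arithmetic setup
  have hA : N * (q - 1) ∣ q ^ N - 1 := aux1 q N (by omega) hNq
  set d : ℕ := (q ^ N - 1) / (N * (q - 1)) with hd
  have hdeq : q ^ N - 1 = N * (q - 1) * d := (Nat.div_mul_cancel hA).symm.trans (mul_comm _ _)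
  have hqN1 : 1 ≤ q ^ N := Nat.one_le_pow _ _ (by omega)
  have hqNgt : 2 ≤ q ^ N := by
    calc 2 ≤ q := hq2
    _ = q ^ 1 := (pow_one q).symm
    _ ≤ q ^ N := Nat.pow_le_pow_right (by omega) hN1
  have hdpos : 0 < d := by
    rcases Nat.eq_zero_or_pos d with h0 | h; · rw [h0, mul_zero] at hdeq; omega
    exact h
  -- η^(q^k - 1) = 1
  have hηne : η ≠ 0 := by rw [hη]; exact pow_ne_zero _ hω0
  have hqk1 : 1 ≤ q ^ k := Nat.one_le_pow _ _ (by omega)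
  have hη1 : η ^ (q ^ k - 1) = 1 := by
    have : η ^ (q ^ k - 1) * η = 1 * η := by
      rw [one_mul, ← pow_succ]
      rw [Nat.sub_add_cancel hqk1]
      exact hsub
    exact mul_right_cancel₀ hηne this
  -- orderOf ω divides d * (q^k - 1)
  have hωpow : ω ^ (d * (q ^ k - 1)) = 1 := by
    rw [pow_mul, ← hη, hη1]
  have hdvd1 : q ^ N - 1 ∣ d * (q ^ k - 1) := hordω ▸ orderOf_dvd_of_pow_eq_one hωpow
  have hdvd2 : N * (q - 1) ∣ q ^ k - 1 := by
    rw [hdeq, mul_comm (N * (q - 1)) d] at hdvd1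
    exact (Nat.mul_dvd_mul_iff_left hdpos).mp hdvd1
  have hNk : N ∣ k := aux2 q N k hq2 hNq hdvd2
  exact Nat.dvd_antisymm hk hNk
end

section
/- Let q = 3^h and F(x) = x^9 + A₃x^6 + A₄x^5 + A₅x^4 + A₆x^3 + A₇x^2 + A₈x ∈ F_q[x] with A₄ ≠ 0, A₆ = A₃² + A₃A₅³/A₄³ + A₅²/A₄, A₇ = 2A₃A₄ + 2A₅³/A₄², A₈ = 2A₃A₅ + A₄² + 2A₅⁴/A₄³. Then (F(x) − F(y))/(x − y) = Π_{i=1}^{4} ((x−y)² + α_i(x+y) + β_i), where α₁,…,α₄ are the roots of x⁴ + 2A₃x + 2A₄ and β_i = α_i² + (A₅/A₄)α_i. -/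
open Polynomial MvPolynomial

set_option maxHeartbeats 4000000 in
set_option maxRecDepth 10000 in
set_option linter.all false in
lemma key {R : Type*} [CommRing R] (x y a b c d e A3 A4 A5 A6 A7 A8 : R)
    (h3 : (3:R) = 0)
    (h1 : a + b + c + d = 0)
    (h2 : a*b + a*c + a*d + b*c + b*d + c*d = 0)
    (hA3 : A3 = a*b*c + a*b*d + a*c*d + b*c*d)
    (hA4 : A4 = -(a*b*c*d))
    (hA5 : A5 = e * A4)
    (hA6 : A6 = A3^2 + A3*e^3 + e^2*A4)
    (hA7 : A7 = 2*A3*A4 + 2*e^3*A4)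
    (hA8 : A8 = 2*A3*e*A4 + A4^2 + 2*e^4*A4) :
    (x - y) * (((x-y)^2 + a*(x+y) + (a^2 + e*a)) * (((x-y)^2 + b*(x+y) + (b^2 + e*b)) *
      (((x-y)^2 + c*(x+y) + (c^2 + e*c)) * ((x-y)^2 + d*(x+y) + (d^2 + e*d))))) =
    (x^9 + A3*x^6 + A4*x^5 + A5*x^4 + A6*x^3 + A7*x^2 + A8*x) -
    (y^9 + A3*y^6 + A4*y^5 + A5*y^4 + A6*y^3 + A7*y^2 + A8*y) := by
  subst hA5 hA6 hA7 hA8 hA3 hA4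
  linear_combination ((((((((((-1)*y*a*b*c*d*e^3 + (-1)*y*a*b*c^2*d*e^2) + ((-1)*y*a*b^2*c*d*e^2 + ((-1)*y*a*b^2*c^2*e^2 + (-1)*y*a^2*b*c*d*e^2))) + (((-1)*y*a^2*b*c^2*e^2 + (-1)*y*a^2*b^2*c*e^2) + (y^2*a*b*c^2*d*e + (y^2*a*b^2*c*d*e + y^2*a*b^2*c^2*e)))) + (((y^2*a^2*b*c*d*e + y^2*a^2*b*c^2*e) + (y^2*a^2*b^2*c*e + ((-1)*y^3*b*c*d*e^2 + (-1)*y^3*b*c^2*d*e))) + (((-1)*y^3*b^2*c*d*e + (-1)*y^3*b^2*c^2*e) + ((-1)*y^3*a*c*d*e^2 + ((-1)*y^3*a*c^2*d*e + (-1)*y^3*a*b*d*e^2))))) + (((((-1)*y^3*a*b*c*e^2 + y^3*a*b*c^2*e) + (y^3*a*b*c^2*d + ((-1)*y^3*a*b^2*d*e + y^3*a*b^2*c*e))) + ((y^3*a*b^2*c*d + y^3*a*b^2*c^2) + ((-1)*y^3*a^2*c*d*e + ((-1)*y^3*a^2*c^2*e + (-1)*y^3*a^2*b*d*e)))) + (((y^3*a^2*b*c*e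 + y^3*a^2*b*c*d) + (y^3*a^2*b*c^2 + ((-1)*y^3*a^2*b^2*e + y^3*a^2*b^2*c))) + ((y^4*b*c*d*e + ((-1)*y^4*b*c^2*d + (-1)*y^4*b^2*c*d)) + ((-1)*y^4*b^2*c^2 + (y^4*a*c*d*e + (-1)*y^4*a*c^2*d)))))) + (((((y^4*a*b*d*e + y^4*a*b*c*e) + ((-1)*y^4*a*b*c*d + (y^4*a*b*c^2 + (-1)*y^4*a*b^2*d))) + ((y^4*a*b^2*c + (-1)*y^4*a^2*c*d) + ((-1)*y^4*a^2*c^2 + ((-1)*y^4*a^2*b*d + y^4*a^2*b*c)))) + ((((-1)*y^4*a^2*b^2 + (-1)*y^5*c*d*e) + ((-1)*y^5*c^2*d + ((-1)*y^5*b*d*e + (-1)*y^5*b*c*e))) + (((-1)*y^5*b*c*d + ((-1)*y^5*b*c^2 + (-1)*y^5*b^2*d)) + ((-1)*y^5*b^2*c + ((-1)*y^5*a*d*e + (-1)*y^5*a*c*e))))) + (((((-1)*y^5*a*c*d + (-1)*y^5*a*c^2) + ((-1)*y^5*a*b*e + ((-1)*y^5*a*b*d + y^5*a*b*c))) + (((-1)*y^5*a*b^2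 + (-1)*y^5*a^2*d) + ((-1)*y^5*a^2*c + ((-1)*y^5*a^2*b + (-1)*y^6*c*d)))) + ((((-1)*y^6*b*d + (-1)*y^6*b*c) + ((-1)*y^6*a*d + ((-1)*y^6*a*c + (-1)*y^6*a*b))) + (((-1)*y^7*e + ((-1)*y^7*d + (-1)*y^7*c)) + ((-1)*y^7*b + ((-1)*y^7*a + (-1)*y^8))))))) + ((((((x*a*b*c*d*e^3 + x*a*b*c^2*d*e^2) + (x*a*b^2*c*d*e^2 + (x*a*b^2*c^2*e^2 + x*a^2*b*c*d*e^2))) + ((x*a^2*b*c^2*e^2 + x*a^2*b^2*c*e^2) + ((-1)*x*y^2*a*b*c^2*d + ((-1)*x*y^2*a*b^2*c*d + (-1)*x*y^2*a*b^2*c^2)))) + ((((-1)*x*y^2*a^2*b*c*d + (-1)*x*y^2*a^2*b*c^2) + ((-1)*x*y^2*a^2*b^2*c + (x*y^3*b*c*d*e + (-1)*x*y^3*b*c^2*d))) + (((-1)*x*y^3*b^2*c*d + ((-1)*x*y^3*b^2*c^2 + x*y^3*a*c*d*e)) + ((-1)*x*y^3*a*c^2*d + (x*y^3*a*b*d*e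 + x*y^3*a*b*c*e))))) + ((((x*y^3*a*b*c*d + x*y^3*a*b*c^2) + ((-1)*x*y^3*a*b^2*d + (x*y^3*a*b^2*c + (-1)*x*y^3*a^2*c*d))) + (((-1)*x*y^3*a^2*c^2 + (-1)*x*y^3*a^2*b*d) + (x*y^3*a^2*b*c + ((-1)*x*y^3*a^2*b^2 + (-1)*x*y^4*c*d*e)))) + ((((-1)*x*y^4*c^2*d + (-1)*x*y^4*b*d*e) + ((-1)*x*y^4*b*c*e + (x*y^4*b*c*d + (-1)*x*y^4*b*c^2))) + (((-1)*x*y^4*b^2*d + ((-1)*x*y^4*b^2*c + (-1)*x*y^4*a*d*e)) + ((-1)*x*y^4*a*c*e + (x*y^4*a*c*d + (-1)*x*y^4*a*c^2)))))) + ((((((-1)*x*y^4*a*b*e + x*y^4*a*b*d) + ((-1)*x*y^4*a*b^2 + ((-1)*x*y^4*a^2*d + (-1)*x*y^4*a^2*c))) + (((-1)*x*y^4*a^2*b + x*y^5*c*d) + (x*y^5*b*d + (x*y^5*b*c + x*y^5*a*d)))) + (((x*y^5*a*c + x*y^5*a*b) + (x*y^6*e + (x*y^6*d + x*y^6*c)))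 + ((x*y^6*b + (x*y^6*a + (-1)*x^2*a*b*c^2*d*e)) + ((-1)*x^2*a*b^2*c*d*e + ((-1)*x^2*a*b^2*c^2*e + (-1)*x^2*a^2*b*c*d*e))))) + (((((-1)*x^2*a^2*b*c^2*e + (-1)*x^2*a^2*b^2*c*e) + (x^2*y*a*b*c^2*d + (x^2*y*a*b^2*c*d + x^2*y*a*b^2*c^2))) + ((x^2*y*a^2*b*c*d + x^2*y*a^2*b*c^2) + (x^2*y*a^2*b^2*c + ((-1)*x^2*y^3*c*d*e + (-1)*x^2*y^3*c^2*d)))) + ((((-1)*x^2*y^3*b*d*e + (-1)*x^2*y^3*b*c*e) + ((-1)*x^2*y^3*b*c*d + ((-1)*x^2*y^3*b*c^2 + (-1)*x^2*y^3*b^2*d))) + (((-1)*x^2*y^3*b^2*c + ((-1)*x^2*y^3*a*d*e + (-1)*x^2*y^3*a*c*e)) + ((-1)*x^2*y^3*a*c*d + ((-1)*x^2*y^3*a*c^2 + (-1)*x^2*y^3*a*b*e)))))))) + ((((((((-1)*x^2*y^3*a*b*d + x^2*y^3*a*b*c) + ((-1)*x^2*y^3*a*b^2 + ((-1)*x^2*y^3*a^2*d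 + (-1)*x^2*y^3*a^2*c))) + (((-1)*x^2*y^3*a^2*b + x^2*y^4*c*d) + (x^2*y^4*b*d + (x^2*y^4*b*c + x^2*y^4*a*d)))) + (((x^2*y^4*a*c + x^2*y^4*a*b) + (x^2*y^6 + (x^3*b*c*d*e^2 + x^3*b*c^2*d*e))) + ((x^3*b^2*c*d*e + x^3*b^2*c^2*e) + (x^3*a*c*d*e^2 + (x^3*a*c^2*d*e + x^3*a*b*d*e^2))))) + ((((x^3*a*b*c*e^2 + (-1)*x^3*a*b*c^2*e) + ((-1)*x^3*a*b*c^2*d + (x^3*a*b^2*d*e + (-1)*x^3*a*b^2*c*e))) + (((-1)*x^3*a*b^2*c*d + (-1)*x^3*a*b^2*c^2) + (x^3*a^2*c*d*e + (x^3*a^2*c^2*e + x^3*a^2*b*d*e)))) + ((((-1)*x^3*a^2*b*c*e + (-1)*x^3*a^2*b*c*d) + ((-1)*x^3*a^2*b*c^2 + (x^3*a^2*b^2*e + (-1)*x^3*a^2*b^2*c))) + (((-1)*x^3*y*b*c*d*e + (x^3*y*b*c^2*d + x^3*y*b^2*c*d)) + (x^3*y*b^2*c^2 + ((-1)*x^3*y*a*c*d*e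 + x^3*y*a*c^2*d)))))) + ((((((-1)*x^3*y*a*b*d*e + (-1)*x^3*y*a*b*c*e) + ((-1)*x^3*y*a*b*c*d + ((-1)*x^3*y*a*b*c^2 + x^3*y*a*b^2*d))) + (((-1)*x^3*y*a*b^2*c + x^3*y*a^2*c*d) + (x^3*y*a^2*c^2 + (x^3*y*a^2*b*d + (-1)*x^3*y*a^2*b*c)))) + (((x^3*y*a^2*b^2 + x^3*y^2*c*d*e) + (x^3*y^2*c^2*d + (x^3*y^2*b*d*e + x^3*y^2*b*c*e))) + ((x^3*y^2*b*c*d + (x^3*y^2*b*c^2 + x^3*y^2*b^2*d)) + (x^3*y^2*b^2*c + (x^3*y^2*a*d*e + x^3*y^2*a*c*e))))) + ((((x^3*y^2*a*c*d + x^3*y^2*a*c^2) + (x^3*y^2*a*b*e + (x^3*y^2*a*b*d + (-1)*x^3*y^2*a*b*c))) + ((x^3*y^2*a*b^2 + x^3*y^2*a^2*d) + (x^3*y^2*a^2*c + (x^3*y^2*a^2*b + (-1)*x^3*y^4*e)))) + ((((-1)*x^3*y^4*d + (-1)*x^3*y^4*c) + ((-1)*x^3*y^4*b + ((-1)*x^3*y^4*a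 + (-1)*x^3*y^5))) + (((-1)*x^4*b*c*d*e + (x^4*b*c^2*d + x^4*b^2*c*d)) + (x^4*b^2*c^2 + ((-1)*x^4*a*c*d*e + x^4*a*c^2*d))))))) + (((((((-1)*x^4*a*b*d*e + (-1)*x^4*a*b*c*e) + (x^4*a*b*c*d + ((-1)*x^4*a*b*c^2 + x^4*a*b^2*d))) + (((-1)*x^4*a*b^2*c + x^4*a^2*c*d) + (x^4*a^2*c^2 + (x^4*a^2*b*d + (-1)*x^4*a^2*b*c)))) + (((x^4*a^2*b^2 + x^4*y*c*d*e) + (x^4*y*c^2*d + (x^4*y*b*d*e + x^4*y*b*c*e))) + (((-1)*x^4*y*b*c*d + (x^4*y*b*c^2 + x^4*y*b^2*d)) + (x^4*y*b^2*c + (x^4*y*a*d*e + x^4*y*a*c*e))))) + (((((-1)*x^4*y*a*c*d + x^4*y*a*c^2) + (x^4*y*a*b*e + ((-1)*x^4*y*a*b*d + x^4*y*a*b^2))) + ((x^4*y*a^2*d + x^4*y*a^2*c) + (x^4*y*a^2*b + ((-1)*x^4*y^2*c*d + (-1)*x^4*y^2*b*d)))) + ((((-1)*x^4*y^2*b*c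 + (-1)*x^4*y^2*a*d) + ((-1)*x^4*y^2*a*c + ((-1)*x^4*y^2*a*b + x^4*y^3*e))) + ((x^4*y^3*d + (x^4*y^3*c + x^4*y^3*b)) + (x^4*y^3*a + (x^5*c*d*e + x^5*c^2*d)))))) + (((((x^5*b*d*e + x^5*b*c*e) + (x^5*b*c*d + (x^5*b*c^2 + x^5*b^2*d))) + ((x^5*b^2*c + x^5*a*d*e) + (x^5*a*c*e + (x^5*a*c*d + x^5*a*c^2)))) + (((x^5*a*b*e + x^5*a*b*d) + ((-1)*x^5*a*b*c + (x^5*a*b^2 + x^5*a^2*d))) + ((x^5*a^2*c + (x^5*a^2*b + (-1)*x^5*y*c*d)) + ((-1)*x^5*y*b*d + ((-1)*x^5*y*b*c + (-1)*x^5*y*a*d))))) + (((((-1)*x^5*y*a*c + (-1)*x^5*y*a*b) + (x^5*y^3 + (x^6*c*d + x^6*b*d))) + ((x^6*b*c + x^6*a*d) + (x^6*a*c + (x^6*a*b + (-1)*x^6*y*e)))) + ((((-1)*x^6*y*d + (-1)*x^6*y*c) + ((-1)*x^6*y*b + ((-1)*x^6*y*a + (-1)*x^6*y^2))) + ((x^7*e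 + (x^7*d + x^7*c)) + (x^7*b + (x^7*a + x^8)))))))))) * h1 + (((((((y*a*b*c^2*e^2 + (y*a*b^2*c*e^2 + y*a^2*b*c*e^2)) + (((-1)*y^2*a*b*c^2*e + (-1)*y^2*a*b^2*c*e) + ((-1)*y^2*a^2*b*c*e + y^3*b*c^2*e))) + (((y^3*b^2*c*e + y^3*a*c^2*e) + ((-1)*y^3*a*b*c*e + (-1)*y^3*a*b*c^2)) + ((y^3*a*b^2*e + (-1)*y^3*a*b^2*c) + (y^3*a^2*c*e + y^3*a^2*b*e)))) + ((((-1)*y^3*a^2*b*c + (y^4*b*c^2 + y^4*b^2*c)) + ((y^4*a*c^2 + (-1)*y^4*a*b*c) + (y^4*a*b^2 + y^4*a^2*c))) + (((y^4*a^2*b + (-1)*y^5*e^2) + (y^5*c^2 + y^5*b*c)) + ((y^5*b^2 + y^5*a*c) + (y^5*a*b + y^5*a^2))))) + ((((y^6*e + (y^7 + (-1)*x*a*b*c^2*e^2)) + (((-1)*x*a*b^2*c*e^2 + (-1)*x*a^2*b*c*e^2) + (x*y^2*a*b*c^2 + x*y^2*a*b^2*c))) + (((x*y^2*a^2*b*c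 + x*y^3*b*c^2) + (x*y^3*b^2*c + x*y^3*a*c^2)) + (((-1)*x*y^3*a*b*c + x*y^3*a*b^2) + (x*y^3*a^2*c + x*y^3*a^2*b)))) + ((((-1)*x*y^4*e^2 + (x*y^4*c^2 + x*y^4*b*c)) + ((x*y^4*b^2 + x*y^4*a*c) + (x*y^4*a*b + x*y^4*a^2))) + ((((-1)*x*y^5*e + x*y^6) + (x^2*a*b*c^2*e + x^2*a*b^2*c*e)) + ((x^2*a^2*b*c*e + (-1)*x^2*y*a*b*c^2) + ((-1)*x^2*y*a*b^2*c + (-1)*x^2*y*a^2*b*c)))))) + ((((((-1)*x^2*y^3*e^2 + (x^2*y^3*c^2 + x^2*y^3*b*c)) + ((x^2*y^3*b^2 + x^2*y^3*a*c) + (x^2*y^3*a*b + x^2*y^3*a^2))) + ((((-1)*x^2*y^4*e + (-1)*x^2*y^5) + ((-1)*x^3*b*c^2*e + (-1)*x^3*b^2*c*e)) + (((-1)*x^3*a*c^2*e + x^3*a*b*c*e) + (x^3*a*b*c^2 + (-1)*x^3*a*b^2*e)))) + (((x^3*a*b^2*c + ((-1)*x^3*a^2*c*e + (-1)*x^3*a^2*b*e))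 + ((x^3*a^2*b*c + (-1)*x^3*y*b*c^2) + ((-1)*x^3*y*b^2*c + (-1)*x^3*y*a*c^2))) + (((x^3*y*a*b*c + (-1)*x^3*y*a*b^2) + ((-1)*x^3*y*a^2*c + (-1)*x^3*y*a^2*b)) + ((x^3*y^2*e^2 + (-1)*x^3*y^2*c^2) + ((-1)*x^3*y^2*b*c + (-1)*x^3*y^2*b^2))))) + (((((-1)*x^3*y^2*a*c + ((-1)*x^3*y^2*a*b + (-1)*x^3*y^2*a^2)) + (((-1)*x^4*b*c^2 + (-1)*x^4*b^2*c) + ((-1)*x^4*a*c^2 + x^4*a*b*c))) + ((((-1)*x^4*a*b^2 + (-1)*x^4*a^2*c) + ((-1)*x^4*a^2*b + x^4*y*e^2)) + (((-1)*x^4*y*c^2 + (-1)*x^4*y*b*c) + ((-1)*x^4*y*b^2 + (-1)*x^4*y*a*c)))) + ((((-1)*x^4*y*a*b + ((-1)*x^4*y*a^2 + x^4*y^2*e)) + ((x^5*e^2 + (-1)*x^5*c^2) + ((-1)*x^5*b*c + (-1)*x^5*b^2))) + ((((-1)*x^5*a*c + (-1)*x^5*a*b) + ((-1)*x^5*a^2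 + x^5*y*e)) + ((x^5*y^2 + (-1)*x^6*e) + ((-1)*x^6*y + (-1)*x^7)))))))) * h2 + (((((((((((-1)*y*a*b*c*d*e^4 + (-1)*y*a*b^2*c^2*d^2*e) + ((-1)*y*a^2*b*c^2*d^2*e + (-1)*y*a^2*b^2*c*d^2*e)) + (((-1)*y*a^2*b^2*c^2*d*e + (-2)*y^2*a*b*c*d*e^3) + ((-1)*y^2*a*b*c*d^2*e^2 + ((-1)*y^2*a*b*c^2*d*e^2 + (-1)*y^2*a*b*c^2*d^2*e)))) + ((((-1)*y^2*a*b^2*c*d*e^2 + (-1)*y^2*a*b^2*c*d^2*e) + ((-1)*y^2*a*b^2*c^2*d*e + (-1)*y^2*a*b^2*c^2*d^2)) + (((-1)*y^2*a^2*b*c*d*e^2 + (-1)*y^2*a^2*b*c*d^2*e) + ((-1)*y^2*a^2*b*c^2*d*e + ((-1)*y^2*a^2*b*c^2*d^2 + (-1)*y^2*a^2*b^2*c*d*e))))) + (((((-1)*y^2*a^2*b^2*c*d^2 + (-1)*y^2*a^2*b^2*c^2*d) + ((-1)*y^3*a*b*c*d*e^2 + (-1)*y^3*a*b*c*d^2*e))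 + (((-1)*y^3*a*b*c^2*d*e + (-1)*y^3*a*b*c^3*e) + ((-1)*y^3*a*b^2*c*d*e + ((-1)*y^3*a*b^2*c^2*e + (-1)*y^3*a*b^3*c*e)))) + ((((-1)*y^3*a^2*b*c*d*e + (-1)*y^3*a^2*b*c^2*e) + ((-1)*y^3*a^2*b^2*c*e + (-1)*y^3*a^3*b*c*e)) + (((-1)*y^4*b*c*d*e^2 + (-1)*y^4*b*c*d^2*e) + ((-1)*y^4*b*c^2*d*e + ((-1)*y^4*b^2*c*d*e + (-1)*y^4*a*c*d*e^2)))))) + ((((((-1)*y^4*a*c*d^2*e + (-1)*y^4*a*c^2*d*e) + ((-1)*y^4*a*b*d*e^2 + (-1)*y^4*a*b*d^2*e)) + (((-1)*y^4*a*b*c*e^2 + (-3)*y^4*a*b*c*d*e) + ((-1)*y^4*a*b*c^2*e + ((-1)*y^4*a*b*c^3 + (-1)*y^4*a*b^2*d*e)))) + ((((-1)*y^4*a*b^2*c*e + (-1)*y^4*a*b^2*c^2) + ((-1)*y^4*a*b^3*c + (-1)*y^4*a^2*c*d*e)) + (((-1)*y^4*a^2*b*d*e + (-1)*y^4*a^2*b*c*e)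 + ((-1)*y^4*a^2*b*c^2 + ((-1)*y^4*a^2*b^2*c + (-1)*y^4*a^3*b*c))))) + (((((-1)*y^5*a*b*c*d + (-1)*y^5*a*b*c^2) + ((-1)*y^5*a*b^2*c + (-1)*y^5*a^2*b*c)) + (((-1)*y^6*c*d*e + (-1)*y^6*b*d*e) + ((-1)*y^6*b*c*e + (y^6*b*c*d + (-1)*y^6*a*d*e)))) + ((((-1)*y^6*a*c*e + y^6*a*c*d) + ((-1)*y^6*a*b*e + y^6*a*b*d)) + ((y^6*a*b*c + x*a*b*c*d*e^4) + (x*a*b^2*c^2*d^2*e + (x*a^2*b*c^2*d^2*e + x*a^2*b^2*c*d^2*e))))))) + ((((((x*a^2*b^2*c^2*d*e + x*y^2*b*c*d*e^3) + (x*y^2*b*c*d^2*e^2 + x*y^2*b*c^2*d*e^2)) + ((x*y^2*b*c^2*d^2*e + x*y^2*b^2*c*d*e^2) + (x*y^2*b^2*c*d^2*e + (x*y^2*b^2*c^2*d*e + x*y^2*b^2*c^2*d^2)))) + (((x*y^2*a*c*d*e^3 + x*y^2*a*c*d^2*e^2) + (x*y^2*a*c^2*d*e^2 + x*y^2*a*c^2*d^2*e))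 + ((x*y^2*a*b*d*e^3 + x*y^2*a*b*d^2*e^2) + (x*y^2*a*b*c*e^3 + ((-2)*x*y^2*a*b*c*d*e^2 + (-1)*x*y^2*a*b*c*d^2*e))))) + ((((x*y^2*a*b*c^2*e^2 + (-1)*x*y^2*a*b*c^2*d*e) + (x*y^2*a*b^2*d*e^2 + x*y^2*a*b^2*d^2*e)) + ((x*y^2*a*b^2*c*e^2 + (-1)*x*y^2*a*b^2*c*d*e) + (x*y^2*a*b^2*c^2*e + (x*y^2*a^2*c*d*e^2 + x*y^2*a^2*c*d^2*e)))) + (((x*y^2*a^2*c^2*d*e + x*y^2*a^2*c^2*d^2) + (x*y^2*a^2*b*d*e^2 + x*y^2*a^2*b*d^2*e)) + ((x*y^2*a^2*b*c*e^2 + (-1)*x*y^2*a^2*b*c*d*e) + (x*y^2*a^2*b*c^2*e + (x*y^2*a^2*b^2*d*e + x*y^2*a^2*b^2*d^2)))))) + (((((x*y^2*a^2*b^2*c*e + x*y^2*a^2*b^2*c^2) + ((2)*x*y^3*b*c*d*e^2 + x*y^3*b*c*d^2*e)) + ((x*y^3*b*c^2*d*e + x*y^3*b*c^2*d^2) + (x*y^3*b^2*c*d*e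 + (x*y^3*b^2*c*d^2 + x*y^3*b^2*c^2*d)))) + ((((2)*x*y^3*a*c*d*e^2 + x*y^3*a*c*d^2*e) + (x*y^3*a*c^2*d*e + x*y^3*a*c^2*d^2)) + (((2)*x*y^3*a*b*d*e^2 + x*y^3*a*b*d^2*e) + ((2)*x*y^3*a*b*c*e^2 + ((-4)*x*y^3*a*b*c*d*e + (-1)*x*y^3*a*b*c*d^2))))) + ((((x*y^3*a*b*c^2*e + (-1)*x*y^3*a*b*c^2*d) + ((-1)*x*y^3*a*b*c^3 + x*y^3*a*b^2*d*e)) + ((x*y^3*a*b^2*d^2 + x*y^3*a*b^2*c*e) + ((-1)*x*y^3*a*b^2*c*d + ((-1)*x*y^3*a*b^3*c + x*y^3*a^2*c*d*e)))) + (((x*y^3*a^2*c*d^2 + x*y^3*a^2*c^2*d) + (x*y^3*a^2*b*d*e + (x*y^3*a^2*b*d^2 + x*y^3*a^2*b*c*e))) + (((-1)*x*y^3*a^2*b*c*d + x*y^3*a^2*b^2*d) + ((-1)*x*y^3*a^3*b*c + ((2)*x*y^4*c*d*e^2 + (2)*x*y^4*c*d^2*e)))))))) + ((((((((2)*x*y^4*c^2*d*e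 + (2)*x*y^4*c^2*d^2) + ((2)*x*y^4*b*d*e^2 + (2)*x*y^4*b*d^2*e)) + (((2)*x*y^4*b*c*e^2 + (2)*x*y^4*b*c*d*e) + ((2)*x*y^4*b*c^2*e + ((2)*x*y^4*b^2*d*e + (2)*x*y^4*b^2*d^2)))) + ((((2)*x*y^4*b^2*c*e + (2)*x*y^4*b^2*c^2) + ((2)*x*y^4*a*d*e^2 + (2)*x*y^4*a*d^2*e)) + (((2)*x*y^4*a*c*e^2 + (2)*x*y^4*a*c*d*e) + ((2)*x*y^4*a*c^2*e + ((2)*x*y^4*a*b*e^2 + (2)*x*y^4*a*b*d*e))))) + (((((2)*x*y^4*a*b*c*e + (-3)*x*y^4*a*b*c*d) + ((2)*x*y^4*a*b^2*e + (2)*x*y^4*a^2*d*e)) + (((2)*x*y^4*a^2*d^2 + (2)*x*y^4*a^2*c*e) + ((2)*x*y^4*a^2*c^2 + ((2)*x*y^4*a^2*b*e + (2)*x*y^4*a^2*b^2)))) + ((((3)*x*y^5*c*d*e + x*y^5*c*d^2) + (x*y^5*c^2*d + (3)*x*y^5*b*d*e)) + ((x*y^5*b*d^2 + (3)*x*y^5*b*c*e)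 + ((-1)*x*y^5*b*c*d + (x*y^5*b*c^2 + x*y^5*b^2*d)))))) + (((((x*y^5*b^2*c + (3)*x*y^5*a*d*e) + (x*y^5*a*d^2 + (3)*x*y^5*a*c*e)) + (((-1)*x*y^5*a*c*d + x*y^5*a*c^2) + ((3)*x*y^5*a*b*e + ((-1)*x*y^5*a*b*d + (-1)*x*y^5*a*b*c)))) + (((x*y^5*a*b^2 + x*y^5*a^2*d) + (x*y^5*a^2*c + x*y^5*a^2*b)) + (((2)*x*y^6*d*e + (2)*x*y^6*d^2) + ((2)*x*y^6*c*e + ((2)*x*y^6*c^2 + (2)*x*y^6*b*e))))) + (((((2)*x*y^6*b^2 + (2)*x*y^6*a*e) + ((2)*x*y^6*a^2 + (2)*x*y^7*d)) + (((2)*x*y^7*c + (2)*x*y^7*b) + ((2)*x*y^7*a + ((3)*x*y^8 + (2)*x^2*a*b*c*d*e^3)))) + (((x^2*a*b*c*d^2*e^2 + x^2*a*b*c^2*d*e^2) + (x^2*a*b*c^2*d^2*e + (x^2*a*b^2*c*d*e^2 + x^2*a*b^2*c*d^2*e))) + ((x^2*a*b^2*c^2*d*e + x^2*a*b^2*c^2*d^2)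 + (x^2*a^2*b*c*d*e^2 + (x^2*a^2*b*c*d^2*e + x^2*a^2*b*c^2*d*e))))))) + ((((((x^2*a^2*b*c^2*d^2 + x^2*a^2*b^2*c*d*e) + (x^2*a^2*b^2*c*d^2 + x^2*a^2*b^2*c^2*d)) + (((-1)*x^2*y*b*c*d*e^3 + (-1)*x^2*y*b*c*d^2*e^2) + ((-1)*x^2*y*b*c^2*d*e^2 + ((-1)*x^2*y*b*c^2*d^2*e + (-1)*x^2*y*b^2*c*d*e^2)))) + ((((-1)*x^2*y*b^2*c*d^2*e + (-1)*x^2*y*b^2*c^2*d*e) + ((-1)*x^2*y*b^2*c^2*d^2 + (-1)*x^2*y*a*c*d*e^3)) + (((-1)*x^2*y*a*c*d^2*e^2 + (-1)*x^2*y*a*c^2*d*e^2) + ((-1)*x^2*y*a*c^2*d^2*e + ((-1)*x^2*y*a*b*d*e^3 + (-1)*x^2*y*a*b*d^2*e^2))))) + (((((-1)*x^2*y*a*b*c*e^3 + (2)*x^2*y*a*b*c*d*e^2) + (x^2*y*a*b*c*d^2*e + (-1)*x^2*y*a*b*c^2*e^2)) + ((x^2*y*a*b*c^2*d*e + (-1)*x^2*y*a*b^2*d*e^2)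 + ((-1)*x^2*y*a*b^2*d^2*e + ((-1)*x^2*y*a*b^2*c*e^2 + x^2*y*a*b^2*c*d*e)))) + ((((-1)*x^2*y*a*b^2*c^2*e + (-1)*x^2*y*a^2*c*d*e^2) + ((-1)*x^2*y*a^2*c*d^2*e + (-1)*x^2*y*a^2*c^2*d*e)) + (((-1)*x^2*y*a^2*c^2*d^2 + (-1)*x^2*y*a^2*b*d*e^2) + ((-1)*x^2*y*a^2*b*d^2*e + ((-1)*x^2*y*a^2*b*c*e^2 + x^2*y*a^2*b*c*d*e)))))) + ((((((-1)*x^2*y*a^2*b*c^2*e + (-1)*x^2*y*a^2*b^2*d*e) + ((-1)*x^2*y*a^2*b^2*d^2 + (-1)*x^2*y*a^2*b^2*c*e)) + (((-1)*x^2*y*a^2*b^2*c^2 + (-3)*x^2*y^3*c*d*e^2) + ((-3)*x^2*y^3*c*d^2*e + ((-3)*x^2*y^3*c^2*d*e + (-3)*x^2*y^3*c^2*d^2)))) + ((((-3)*x^2*y^3*b*d*e^2 + (-3)*x^2*y^3*b*d^2*e) + ((-3)*x^2*y^3*b*c*e^2 + (3)*x^2*y^3*b*c*d*e)) + ((x^2*y^3*b*c*d^2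 + (-3)*x^2*y^3*b*c^2*e) + (x^2*y^3*b*c^2*d + ((-3)*x^2*y^3*b^2*d*e + (-3)*x^2*y^3*b^2*d^2))))) + (((((-3)*x^2*y^3*b^2*c*e + x^2*y^3*b^2*c*d) + ((-3)*x^2*y^3*b^2*c^2 + (-3)*x^2*y^3*a*d*e^2)) + (((-3)*x^2*y^3*a*d^2*e + (-3)*x^2*y^3*a*c*e^2) + ((3)*x^2*y^3*a*c*d*e + (x^2*y^3*a*c*d^2 + (-3)*x^2*y^3*a*c^2*e)))) + (((x^2*y^3*a*c^2*d + (-3)*x^2*y^3*a*b*e^2) + ((3)*x^2*y^3*a*b*d*e + (x^2*y^3*a*b*d^2 + (3)*x^2*y^3*a*b*c*e))) + (((-1)*x^2*y^3*a*b*c*d + (-3)*x^2*y^3*a*b^2*e) + (x^2*y^3*a*b^2*d + ((-3)*x^2*y^3*a^2*d*e + (-3)*x^2*y^3*a^2*d^2))))))))) + (((((((((-3)*x^2*y^3*a^2*c*e + x^2*y^3*a^2*c*d) + ((-3)*x^2*y^3*a^2*c^2 + (-3)*x^2*y^3*a^2*b*e)) + ((x^2*y^3*a^2*b*d + (-3)*x^2*y^3*a^2*b^2)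 + ((-3)*x^2*y^4*c*d*e + ((-2)*x^2*y^4*c*d^2 + (-2)*x^2*y^4*c^2*d)))) + ((((-3)*x^2*y^4*b*d*e + (-2)*x^2*y^4*b*d^2) + ((-3)*x^2*y^4*b*c*e + (-2)*x^2*y^4*b*c^2)) + (((-2)*x^2*y^4*b^2*d + (-2)*x^2*y^4*b^2*c) + ((-3)*x^2*y^4*a*d*e + ((-2)*x^2*y^4*a*d^2 + (-3)*x^2*y^4*a*c*e))))) + (((((-2)*x^2*y^4*a*c^2 + (-3)*x^2*y^4*a*b*e) + ((-2)*x^2*y^4*a*b^2 + (-2)*x^2*y^4*a^2*d)) + (((-2)*x^2*y^4*a^2*c + (-2)*x^2*y^4*a^2*b) + ((-7)*x^2*y^5*d*e + ((-7)*x^2*y^5*d^2 + (-7)*x^2*y^5*c*e)))) + ((((-7)*x^2*y^5*c^2 + (-7)*x^2*y^5*b*e) + ((-7)*x^2*y^5*b^2 + (-7)*x^2*y^5*a*e)) + (((-7)*x^2*y^5*a^2 + (-5)*x^2*y^6*d) + ((-5)*x^2*y^6*c + ((-5)*x^2*y^6*b + (-5)*x^2*y^6*a)))))) + ((((((-12)*x^2*y^7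 + x^3*a*b*c*d*e^2) + (x^3*a*b*c*d^2*e + x^3*a*b*c^2*d*e)) + ((x^3*a*b*c^3*e + x^3*a*b^2*c*d*e) + (x^3*a*b^2*c^2*e + (x^3*a*b^3*c*e + x^3*a^2*b*c*d*e)))) + (((x^3*a^2*b*c^2*e + x^3*a^2*b^2*c*e) + (x^3*a^3*b*c*e + (-2)*x^3*y*b*c*d*e^2)) + (((-1)*x^3*y*b*c*d^2*e + (-1)*x^3*y*b*c^2*d*e) + ((-1)*x^3*y*b*c^2*d^2 + ((-1)*x^3*y*b^2*c*d*e + (-1)*x^3*y*b^2*c*d^2))))) + (((((-1)*x^3*y*b^2*c^2*d + (-2)*x^3*y*a*c*d*e^2) + ((-1)*x^3*y*a*c*d^2*e + (-1)*x^3*y*a*c^2*d*e)) + (((-1)*x^3*y*a*c^2*d^2 + (-2)*x^3*y*a*b*d*e^2) + ((-1)*x^3*y*a*b*d^2*e + ((-2)*x^3*y*a*b*c*e^2 + (4)*x^3*y*a*b*c*d*e)))) + (((x^3*y*a*b*c*d^2 + (-1)*x^3*y*a*b*c^2*e) + (x^3*y*a*b*c^2*d + x^3*y*a*b*c^3)) +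 (((-1)*x^3*y*a*b^2*d*e + (-1)*x^3*y*a*b^2*d^2) + ((-1)*x^3*y*a*b^2*c*e + (x^3*y*a*b^2*c*d + x^3*y*a*b^3*c))))))) + (((((((-1)*x^3*y*a^2*c*d*e + (-1)*x^3*y*a^2*c*d^2) + ((-1)*x^3*y*a^2*c^2*d + (-1)*x^3*y*a^2*b*d*e)) + (((-1)*x^3*y*a^2*b*d^2 + (-1)*x^3*y*a^2*b*c*e) + (x^3*y*a^2*b*c*d + ((-1)*x^3*y*a^2*b^2*d + x^3*y*a^3*b*c)))) + ((((3)*x^3*y^2*c*d*e^2 + (3)*x^3*y^2*c*d^2*e) + ((3)*x^3*y^2*c^2*d*e + (3)*x^3*y^2*c^2*d^2)) + (((3)*x^3*y^2*b*d*e^2 + (3)*x^3*y^2*b*d^2*e) + ((3)*x^3*y^2*b*c*e^2 + ((-3)*x^3*y^2*b*c*d*e + (-1)*x^3*y^2*b*c*d^2))))) + (((((3)*x^3*y^2*b*c^2*e + (-1)*x^3*y^2*b*c^2*d) + ((3)*x^3*y^2*b^2*d*e + (3)*x^3*y^2*b^2*d^2)) + (((3)*x^3*y^2*b^2*c*e +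 (-1)*x^3*y^2*b^2*c*d) + ((3)*x^3*y^2*b^2*c^2 + ((3)*x^3*y^2*a*d*e^2 + (3)*x^3*y^2*a*d^2*e)))) + ((((3)*x^3*y^2*a*c*e^2 + (-3)*x^3*y^2*a*c*d*e) + ((-1)*x^3*y^2*a*c*d^2 + (3)*x^3*y^2*a*c^2*e)) + (((-1)*x^3*y^2*a*c^2*d + (3)*x^3*y^2*a*b*e^2) + ((-3)*x^3*y^2*a*b*d*e + ((-1)*x^3*y^2*a*b*d^2 + (-3)*x^3*y^2*a*b*c*e)))))) + (((((x^3*y^2*a*b*c*d + (3)*x^3*y^2*a*b^2*e) + ((-1)*x^3*y^2*a*b^2*d + (3)*x^3*y^2*a^2*d*e)) + (((3)*x^3*y^2*a^2*d^2 + (3)*x^3*y^2*a^2*c*e) + ((-1)*x^3*y^2*a^2*c*d + ((3)*x^3*y^2*a^2*c^2 + (3)*x^3*y^2*a^2*b*e)))) + ((((-1)*x^3*y^2*a^2*b*d + (3)*x^3*y^2*a^2*b^2) + ((12)*x^3*y^4*d*e + (12)*x^3*y^4*d^2)) + (((12)*x^3*y^4*c*e + (-1)*x^3*y^4*c*d)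 + ((12)*x^3*y^4*c^2 + ((12)*x^3*y^4*b*e + (-1)*x^3*y^4*b*d))))) + (((((-1)*x^3*y^4*b*c + (12)*x^3*y^4*b^2) + ((12)*x^3*y^4*a*e + (-1)*x^3*y^4*a*d)) + (((-1)*x^3*y^4*a*c + (-1)*x^3*y^4*a*b) + ((12)*x^3*y^4*a^2 + ((5)*x^3*y^5*d + (5)*x^3*y^5*c)))) + ((((5)*x^3*y^5*b + (5)*x^3*y^5*a) + ((28)*x^3*y^6 + (x^4*b*c*d*e^2 + x^4*b*c*d^2*e))) + ((x^4*b*c^2*d*e + x^4*b^2*c*d*e) + (x^4*a*c*d*e^2 + (x^4*a*c*d^2*e + x^4*a*c^2*d*e)))))))) + (((((((x^4*a*b*d*e^2 + x^4*a*b*d^2*e) + (x^4*a*b*c*e^2 + (3)*x^4*a*b*c*d*e)) + ((x^4*a*b*c^2*e + x^4*a*b*c^3) + (x^4*a*b^2*d*e + (x^4*a*b^2*c*e + x^4*a*b^2*c^2)))) + (((x^4*a*b^3*c + x^4*a^2*c*d*e) + (x^4*a^2*b*d*e + x^4*a^2*b*c*e)) + ((x^4*a^2*b*c^2 + x^4*a^2*b^2*c)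 + (x^4*a^3*b*c + ((-2)*x^4*y*c*d*e^2 + (-2)*x^4*y*c*d^2*e))))) + (((((-2)*x^4*y*c^2*d*e + (-2)*x^4*y*c^2*d^2) + ((-2)*x^4*y*b*d*e^2 + (-2)*x^4*y*b*d^2*e)) + (((-2)*x^4*y*b*c*e^2 + (-2)*x^4*y*b*c*d*e) + ((-2)*x^4*y*b*c^2*e + ((-2)*x^4*y*b^2*d*e + (-2)*x^4*y*b^2*d^2)))) + ((((-2)*x^4*y*b^2*c*e + (-2)*x^4*y*b^2*c^2) + ((-2)*x^4*y*a*d*e^2 + (-2)*x^4*y*a*d^2*e)) + (((-2)*x^4*y*a*c*e^2 + (-2)*x^4*y*a*c*d*e) + ((-2)*x^4*y*a*c^2*e + ((-2)*x^4*y*a*b*e^2 + (-2)*x^4*y*a*b*d*e)))))) + ((((((-2)*x^4*y*a*b*c*e + (3)*x^4*y*a*b*c*d) + ((-2)*x^4*y*a*b^2*e + (-2)*x^4*y*a^2*d*e)) + (((-2)*x^4*y*a^2*d^2 + (-2)*x^4*y*a^2*c*e) + ((-2)*x^4*y*a^2*c^2 + ((-2)*x^4*y*a^2*b*e + (-2)*x^4*y*a^2*b^2))))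 + ((((3)*x^4*y^2*c*d*e + (2)*x^4*y^2*c*d^2) + ((2)*x^4*y^2*c^2*d + (3)*x^4*y^2*b*d*e)) + (((2)*x^4*y^2*b*d^2 + (3)*x^4*y^2*b*c*e) + ((2)*x^4*y^2*b*c^2 + ((2)*x^4*y^2*b^2*d + (2)*x^4*y^2*b^2*c))))) + (((((3)*x^4*y^2*a*d*e + (2)*x^4*y^2*a*d^2) + ((3)*x^4*y^2*a*c*e + (2)*x^4*y^2*a*c^2)) + (((3)*x^4*y^2*a*b*e + (2)*x^4*y^2*a*b^2) + ((2)*x^4*y^2*a^2*d + ((2)*x^4*y^2*a^2*c + (2)*x^4*y^2*a^2*b)))) + ((((-12)*x^4*y^3*d*e + (-12)*x^4*y^3*d^2) + ((-12)*x^4*y^3*c*e + (x^4*y^3*c*d + (-12)*x^4*y^3*c^2))) + (((-12)*x^4*y^3*b*e + x^4*y^3*b*d) + (x^4*y^3*b*c + ((-12)*x^4*y^3*b^2 + (-12)*x^4*y^3*a*e))))))) + ((((((x^4*y^3*a*d + x^4*y^3*a*c) + (x^4*y^3*a*b + (-12)*x^4*y^3*a^2)) + (((-42)*x^4*y^5 +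 x^5*a*b*c*d) + (x^5*a*b*c^2 + (x^5*a*b^2*c + x^5*a^2*b*c)))) + ((((-3)*x^5*y*c*d*e + (-1)*x^5*y*c*d^2) + ((-1)*x^5*y*c^2*d + (-3)*x^5*y*b*d*e)) + (((-1)*x^5*y*b*d^2 + (-3)*x^5*y*b*c*e) + (x^5*y*b*c*d + ((-1)*x^5*y*b*c^2 + (-1)*x^5*y*b^2*d))))) + (((((-1)*x^5*y*b^2*c + (-3)*x^5*y*a*d*e) + ((-1)*x^5*y*a*d^2 + (-3)*x^5*y*a*c*e)) + ((x^5*y*a*c*d + (-1)*x^5*y*a*c^2) + ((-3)*x^5*y*a*b*e + (x^5*y*a*b*d + x^5*y*a*b*c)))) + ((((-1)*x^5*y*a*b^2 + (-1)*x^5*y*a^2*d) + ((-1)*x^5*y*a^2*c + (-1)*x^5*y*a^2*b)) + (((7)*x^5*y^2*d*e + (7)*x^5*y^2*d^2) + ((7)*x^5*y^2*c*e + ((7)*x^5*y^2*c^2 + (7)*x^5*y^2*b*e)))))) + ((((((7)*x^5*y^2*b^2 + (7)*x^5*y^2*a*e) + ((7)*x^5*y^2*a^2 + (-5)*x^5*y^3*d))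 + (((-5)*x^5*y^3*c + (-5)*x^5*y^3*b) + ((-5)*x^5*y^3*a + ((42)*x^5*y^4 + x^6*c*d*e)))) + (((x^6*b*d*e + x^6*b*c*e) + ((-1)*x^6*b*c*d + x^6*a*d*e)) + ((x^6*a*c*e + (-1)*x^6*a*c*d) + (x^6*a*b*e + ((-1)*x^6*a*b*d + (-1)*x^6*a*b*c))))) + (((((-2)*x^6*y*d*e + (-2)*x^6*y*d^2) + ((-2)*x^6*y*c*e + (-2)*x^6*y*c^2)) + (((-2)*x^6*y*b*e + (-2)*x^6*y*b^2) + ((-2)*x^6*y*a*e + ((-2)*x^6*y*a^2 + (5)*x^6*y^2*d)))) + ((((5)*x^6*y^2*c + (5)*x^6*y^2*b) + ((5)*x^6*y^2*a + ((-28)*x^6*y^3 + (-2)*x^7*y*d))) + (((-2)*x^7*y*c + (-2)*x^7*y*b) + ((-2)*x^7*y*a + ((12)*x^7*y^2 + (-3)*x^8*y))))))))))) * h3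


lemma multiset_card_four {α : Type*} {s : Multiset α} (h : Multiset.card s = 4) :
    ∃ a b c d, s = a ::ₘ b ::ₘ c ::ₘ d ::ₘ 0 := by
  induction s using Quotient.inductionOn with
  | h l =>
    simp only [Multiset.quot_mk_to_coe, Multiset.coe_card] at h
    match l, h with
    | [a,b,c,d], _ => exact ⟨a,b,c,d, rfl⟩

set_option maxHeartbeats 2000000 in
set_option maxRecDepth 20000 in
/-- let `q = 3^h` and `F(x) = x^9 + A₃x^6 + A₄x^5 + A₅x^4 + A₆x^3 + A₇x^2
+ A₈x` with `A₄ ≠ 0` and `A₆, A₇, A₈` given by the stated formulas. Then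
`(F(x) − F(y))/(x − y) = Π_{i=1}^{4} ((x−y)² + α_i(x+y) + β_i)`, where `α₁,…,α₄` are
the roots of `x⁴ + 2A₃x + 2A₄` and `β_i = α_i² + (A₅/A₄)α_i`. -/
theorem stmt_16 {F : Type*} [Field F] [Fintype F] (h : ℕ) [CharP F 3]
    (hcard : Fintype.card F = 3 ^ h) (A₃ A₄ A₅ A₆ A₇ A₈ : F) (hA₄ : A₄ ≠ 0)
    (hA₆ : A₆ = A₃ ^ 2 + A₃ * A₅ ^ 3 / A₄ ^ 3 + A₅ ^ 2 / A₄)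
    (hA₇ : A₇ = 2 * A₃ * A₄ + 2 * A₅ ^ 3 / A₄ ^ 2)
    (hA₈ : A₈ = 2 * A₃ * A₅ + A₄ ^ 2 + 2 * A₅ ^ 4 / A₄ ^ 3)
    (f : F[X]) (hf : f = Polynomial.X ^ 9 + Polynomial.C A₃ * Polynomial.X ^ 6 +
      Polynomial.C A₄ * Polynomial.X ^ 5 + Polynomial.C A₅ * Polynomial.X ^ 4 +
      Polynomial.C A₆ * Polynomial.X ^ 3 + Polynomial.C A₇ * Polynomial.X ^ 2 +
      Polynomial.C A₈ * Polynomial.X)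
    (φ : MvPolynomial (Fin 2) F)
    (hφ : (MvPolynomial.X 0 - MvPolynomial.X 1) * φ =
      Polynomial.aeval (MvPolynomial.X 0 : MvPolynomial (Fin 2) F) f -
      Polynomial.aeval (MvPolynomial.X 1 : MvPolynomial (Fin 2) F) f) :
    MvPolynomial.map (algebraMap F (AlgebraicClosure F)) φ =
      (((Polynomial.X ^ 4 + Polynomial.C (2 * A₃) * Polynomial.X + Polynomial.C (2 * A₄) :
          F[X]).aroots (AlgebraicClosure F)).map
        (fun α => (MvPolynomial.X 0 - MvPolynomial.X 1) ^ 2 +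
          MvPolynomial.C α * (MvPolynomial.X 0 + MvPolynomial.X 1) +
          MvPolynomial.C (α ^ 2 + algebraMap F (AlgebraicClosure F) (A₅ / A₄) * α))).prod := by
  classical
  subst hf
  set K := AlgebraicClosure F with hK
  set σ : F →+* K := algebraMap F K with hσ
  set p : F[X] := Polynomial.X ^ 4 + Polynomial.C (2 * A₃) * Polynomial.X +
    Polynomial.C (2 * A₄) with hp
  have h30 : (3 : K) = 0 := CharP.cast_eq_zero K 3
  have hpm : p.Monic := by rw [hp]; monicity!
  have hdeg : p.natDegree = 4 := by rw [hp]; compute_degree!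
  have hsplits : ((p.map σ)).Splits := IsAlgClosed.splits (p.map σ)
  have hcard4 : Multiset.card (p.aroots K) = 4 := by
    rw [aroots_def, (Polynomial.splits_iff_card_roots).mp hsplits, Polynomial.natDegree_map, hdeg]
  have hprodroots : p.map σ = ((p.aroots K).map fun r => Polynomial.X - Polynomial.C r).prod := by
    simpa [aroots_def] using hsplits.eq_prod_roots_of_monic (hpm.map σ)
  obtain ⟨a, b, c, d, habcd⟩ := multiset_card_four hcard4
  -- Vieta
  have heq : Polynomial.X ^ 4 + Polynomial.C (σ (2 * A₃)) * Polynomial.X ^ 1 +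
      Polynomial.C (σ (2 * A₄)) =
      Polynomial.X ^ 4 + Polynomial.C (-(a+b+c+d)) * Polynomial.X ^ 3 +
      Polynomial.C (a*b+a*c+a*d+b*c+b*d+c*d) * Polynomial.X ^ 2 +
      Polynomial.C (-(a*b*c+a*b*d+a*c*d+b*c*d)) * Polynomial.X ^ 1 +
      Polynomial.C (a*b*c*d) := by
    have h1 : p.map σ = Polynomial.X ^ 4 + Polynomial.C (σ (2 * A₃)) * Polynomial.X ^ 1 +
        Polynomial.C (σ (2 * A₄)) := by
      rw [hp]; simp only [Polynomial.map_add, Polynomial.map_mul, Polynomial.map_pow,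
        Polynomial.map_X, Polynomial.map_C]; ring
    rw [← h1, hprodroots, habcd]
    simp only [Multiset.map_cons, Multiset.prod_cons, Multiset.map_zero, Multiset.prod_zero,
      mul_one, map_add, map_mul, map_neg]
    ring
  have hv1 : a + b + c + d = 0 := by
    have h3 := congrArg (fun q => Polynomial.coeff q 3) heq
    simp only [Polynomial.coeff_add, Polynomial.coeff_C_mul, Polynomial.coeff_X_pow,
      Polynomial.coeff_C] at h3
    norm_num at h3
    linear_combination h3
  have hv2 : a*b + a*c + a*d + b*c + b*d + c*d = 0 := by
    have h3 := congrArg (fun q => Polynomial.coeff q 2) heq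
    simp only [Polynomial.coeff_add, Polynomial.coeff_C_mul, Polynomial.coeff_X_pow,
      Polynomial.coeff_C] at h3
    norm_num at h3
    linear_combination -h3
  have hv3 : σ A₃ = a*b*c + a*b*d + a*c*d + b*c*d := by
    have h3 := congrArg (fun q => Polynomial.coeff q 1) heq
    simp only [Polynomial.coeff_add, Polynomial.coeff_C_mul, Polynomial.coeff_X_pow,
      Polynomial.coeff_C] at h3
    norm_num [map_mul, map_ofNat] at h3
    linear_combination -h3 + σ A₃ * h30
  have hv4 : σ A₄ = -(a*b*c*d) := by
    have h3 := congrArg (fun q => Polynomial.coeff q 0) heq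
    simp only [Polynomial.coeff_add, Polynomial.coeff_C_mul, Polynomial.coeff_X_pow,
      Polynomial.coeff_C] at h3
    norm_num [map_mul, map_ofNat] at h3
    linear_combination -h3 + σ A₄ * h30
  have hA4ne : σ A₄ ≠ 0 := fun h0 => hA₄ ((_root_.map_eq_zero σ).mp h0)
  set e : K := σ A₅ / σ A₄ with he
  have hv5 : σ A₅ = e * σ A₄ := (div_mul_cancel₀ _ hA4ne).symm
  have hv6 : σ A₆ = (σ A₃)^2 + σ A₃ * e^3 + e^2 * σ A₄ := by
    have hh := congrArg σ hA₆
    simp only [map_add, map_div₀, map_mul, map_pow] at hh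
    rw [hh, he, div_pow, div_pow, div_mul_eq_mul_div, pow_two (σ A₄), mul_div_mul_right _ _ hA4ne]; ring
  have hv7 : σ A₇ = 2 * σ A₃ * σ A₄ + 2 * e^3 * σ A₄ := by
    have hh := congrArg σ hA₇
    simp only [map_add, map_div₀, map_mul, map_pow, map_ofNat] at hh
    rw [hh, he, div_pow, mul_assoc (2:K) (σ A₅ ^ 3 / σ A₄ ^ 3) (σ A₄), div_mul_eq_mul_div, (pow_succ (σ A₄) 2 : σ A₄ ^ 3 = _), mul_div_mul_right _ _ hA4ne]; ring
  have hv8 : σ A₈ = 2 * σ A₃ * e * σ A₄ + (σ A₄)^2 + 2 * e^4 * σ A₄ := by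
    have hh := congrArg σ hA₈
    simp only [map_add, map_div₀, map_mul, map_pow, map_ofNat] at hh
    rw [hh, he, div_pow, mul_assoc (2 * σ A₃) (σ A₅ / σ A₄) (σ A₄), div_mul_cancel₀ _ hA4ne, mul_assoc (2:K) (σ A₅ ^ 4 / σ A₄ ^ 4) (σ A₄), div_mul_eq_mul_div, (pow_succ (σ A₄) 3 : σ A₄ ^ 4 = _), mul_div_mul_right _ _ hA4ne]; ring
  -- map hφ to K
  simp only [map_add, map_mul, map_pow, Polynomial.aeval_X, Polynomial.aeval_C,
    MvPolynomial.algebraMap_eq] at hφ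
  have hφ' := congrArg (MvPolynomial.map σ) hφ
  simp only [map_mul, map_sub, map_add, map_pow, MvPolynomial.map_X, MvPolynomial.map_C] at hφ'
  -- goal
  rw [habcd]
  simp only [Multiset.map_cons, Multiset.prod_cons, Multiset.map_zero, Multiset.prod_zero,
    mul_one, map_div₀]
  rw [← he]
  simp only [map_add, map_mul, map_pow]
  have h30' : (3 : MvPolynomial (Fin 2) K) = 0 := by
    rw [show ((3 : MvPolynomial (Fin 2) K)) = MvPolynomial.C 3 from (map_ofNat _ 3).symm, h30,
      map_zero]
  have hc1 : (MvPolynomial.C a + MvPolynomial.C b + MvPolynomial.C c + MvPolynomial.C d :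
      MvPolynomial (Fin 2) K) = 0 := by
    simpa using congrArg (MvPolynomial.C (σ := Fin 2)) hv1
  have hc2 := congrArg (MvPolynomial.C (σ := Fin 2)) hv2
  simp only [map_add, map_mul, map_zero] at hc2
  have hc3 := congrArg (MvPolynomial.C (σ := Fin 2)) hv3
  simp only [map_add, map_mul] at hc3
  have hc4 := congrArg (MvPolynomial.C (σ := Fin 2)) hv4
  simp only [map_neg, map_mul] at hc4
  have hc5 := congrArg (MvPolynomial.C (σ := Fin 2)) hv5
  simp only [map_mul] at hc5
  have hc6 := congrArg (MvPolynomial.C (σ := Fin 2)) hv6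
  simp only [map_add, map_mul, map_pow] at hc6
  have hc7 := congrArg (MvPolynomial.C (σ := Fin 2)) hv7
  simp only [map_add, map_mul, map_pow, map_ofNat] at hc7
  have hc8 := congrArg (MvPolynomial.C (σ := Fin 2)) hv8
  simp only [map_add, map_mul, map_pow, map_ofNat] at hc8
  have hX01 : (MvPolynomial.X 0 - MvPolynomial.X 1 : MvPolynomial (Fin 2) K) ≠ 0 :=
    sub_ne_zero.mpr (fun hh => absurd (MvPolynomial.X_injective hh) (by decide))
  apply mul_left_cancel₀ hX01
  rw [hφ']
  have hk := key (MvPolynomial.X 0) (MvPolynomial.X 1) (MvPolynomial.C a)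
    (MvPolynomial.C b) (MvPolynomial.C c) (MvPolynomial.C d) (MvPolynomial.C e)
    (MvPolynomial.C (σ A₃)) (MvPolynomial.C (σ A₄)) (MvPolynomial.C (σ A₅))
    (MvPolynomial.C (σ A₆)) (MvPolynomial.C (σ A₇)) (MvPolynomial.C (σ A₈))
    h30' hc1 hc2 hc3 hc4 hc5 hc6 hc7 hc8
  exact hk.symm
end

section
/- Let q = 3^h and suppose x⁴ + 2A₃x + 2A₄ ∈ F_q[x] is irreducible over F_q with roots α₁,…,α₄, and let A₅ ∈ F_q, A₄ ≠ 0. The 8 elements −α_i ± √(−(A₅/A₄)α_i) form a single orbit under the Frobenius map x ↦ x^q if and only if x^8 + 2A₃x² + 2A₄ has no root in F_{q^4}. -/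
open Polynomial

set_option maxHeartbeats 2000000

/-- let `q = 3^h`, `x⁴ + 2A₃x + 2A₄ ∈ F_q[x]` irreducible, `A₄ ≠ 0`. The
8 elements `−α_i ± √(−(A₅/A₄)α_i)` (where `α_i` are the roots of the quartic) form a
single Frobenius orbit iff `x^8 + 2A₃x² + 2A₄` has no root in `F_{q^4}`. -/
theorem stmt_17 {F : Type*} [Field F] [Fintype F] (h q : ℕ) [CharP F 3]
    (hcard : Fintype.card F = q) (hq : q = 3 ^ h) (A₃ A₄ A₅ : F) (hA₄ : A₄ ≠ 0)
    (hirr : Irreducible (X ^ 4 + C (2 * A₃) * X + C (2 * A₄) : F[X])) :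
    IsSingleFrobeniusOrbit q
      {z : AlgebraicClosure F | ∃ α : AlgebraicClosure F,
        α ^ 4 + algebraMap F (AlgebraicClosure F) (2 * A₃) * α +
          algebraMap F (AlgebraicClosure F) (2 * A₄) = 0 ∧
        ∃ s : AlgebraicClosure F,
          s ^ 2 = -(algebraMap F (AlgebraicClosure F) (A₅ / A₄)) * α ∧ z = -α + s}
    ↔ ∀ x : AlgebraicClosure F, x ^ q ^ 4 = x →
        x ^ 8 + algebraMap F (AlgebraicClosure F) (2 * A₃) * x ^ 2 +
          algebraMap F (AlgebraicClosure F) (2 * A₄) ≠ 0 := by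
  classical
  set K := AlgebraicClosure F with hK
  set φ := algebraMap F K with hφ
  have φinj : Function.Injective φ := φ.injective
  haveI charK : CharP K 3 := charP_of_injective_algebraMap φinj 3
  haveI : Fact (Nat.Prime 3) := ⟨by norm_num⟩
  have hq1 : 1 < q := by rw [← hcard]; exact Fintype.one_lt_card
  have hq0 : q ≠ 0 := by omega
  have hqodd : Odd q := by rw [hq]; exact Odd.pow ⟨1, rfl⟩
  have hchar3 : (3 : K) = 0 := CharP.cast_eq_zero K 3
  have hchar3F : (3 : F) = 0 := CharP.cast_eq_zero F 3
  have htwoF : (2 : F) ≠ 0 := by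
    intro h2
    have : (1 : F) = 0 := by linear_combination hchar3F - h2
    exact one_ne_zero this
  -- pow juggling
  have haddp : ∀ (i : ℕ) (x y : K), (x + y) ^ q ^ i = x ^ q ^ i + y ^ q ^ i := by
    intro i x y; rw [hq, ← pow_mul]; exact add_pow_char_pow x y 3 (h * i)
  have hsubp : ∀ (i : ℕ) (x y : K), (x - y) ^ q ^ i = x ^ q ^ i - y ^ q ^ i := by
    intro i x y; rw [hq, ← pow_mul]; exact sub_pow_char_pow x y (h * i)
  have hnegp : ∀ (i : ℕ) (x : K), (-x) ^ q ^ i = -(x ^ q ^ i) := by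
    intro i x; exact Odd.neg_pow (hqodd.pow) x
  have hφfix : ∀ (i : ℕ) (t : F), (φ t) ^ q ^ i = φ t := by
    intro i t
    have h1 : t ^ Fintype.card F ^ i = t := FiniteField.pow_card_pow i t
    rw [hcard] at h1
    rw [← map_pow, h1]
  have hppow : ∀ (i : ℕ) (x : K), x ^ q ^ (i + 1) = (x ^ q ^ i) ^ q := by
    intro i x; rw [← pow_mul, pow_succ]
  have hsplit : ∀ (x : K) (i j : ℕ), x ^ q ^ (j + i) = (x ^ q ^ j) ^ q ^ i := by
    intro x i j; rw [← pow_mul, pow_add]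
  have hadd1 : ∀ x y : K, (x + y) ^ q = x ^ q + y ^ q := by
    intro x y; have := haddp 1 x y; simpa using this
  have hφq : ∀ t : F, (φ t) ^ q = φ t := by
    intro t; have := hφfix 1 t; simpa using this
  have powinj : ∀ (i : ℕ) {x y : K}, x ^ q ^ i = y ^ q ^ i → x = y := by
    intro i x y hxy
    have h0 : (x - y) ^ q ^ i = 0 := by rw [hsubp i x y, hxy, sub_self]
    have := pow_eq_zero_iff (pow_ne_zero i hq0) |>.mp h0
    exact sub_eq_zero.mp this
  have powinj1 : ∀ {x y : K}, x ^ q = y ^ q → x = y := by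
    intro x y hxy; exact powinj 1 (by simpa using hxy)
  -- the quartic
  set a3 : F := 2 * A₃ with ha3
  set a4 : F := 2 * A₄ with ha4def
  have ha4 : a4 ≠ 0 := mul_ne_zero htwoF hA₄
  set P : F[X] := X ^ 4 + C a3 * X + C a4 with hP
  have hPassoc : P = X ^ 4 + (C a3 * X + C a4) := by rw [hP, add_assoc]
  have hlowdeg : (C a3 * X + C a4 : F[X]).degree < (X ^ 4 : F[X]).degree := by
    rw [degree_X_pow]
    refine lt_of_le_of_lt (degree_add_le _ _) ?_
    refine max_lt (lt_of_le_of_lt (degree_mul_le _ _) ?_) (lt_of_le_of_lt (degree_C_le) ?_)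
    · refine lt_of_le_of_lt (add_le_add degree_C_le (le_of_eq degree_X)) ?_
      norm_num
    · norm_num
  have hPmonic : P.Monic := by
    rw [hPassoc]; exact (monic_X_pow 4).add_of_left hlowdeg
  have hPdeg : P.degree = 4 := by
    rw [hPassoc, degree_add_eq_left_of_degree_lt hlowdeg, degree_X_pow]
    norm_num
  obtain ⟨α₀, hα₀⟩ := IsAlgClosed.exists_root (P.map φ) (by
    rw [degree_map, hPdeg]; norm_num)
  have hroot0 : α₀ ^ 4 + φ a3 * α₀ + φ a4 = 0 := by
    have := hα₀
    rw [IsRoot.def, eval_map, hP] at this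
    simpa [eval₂_add, eval₂_mul, eval₂_pow, eval₂_X, eval₂_C] using this
  have hstab : ∀ β : K, β ^ 4 + φ a3 * β + φ a4 = 0 →
      (β ^ q) ^ 4 + φ a3 * β ^ q + φ a4 = 0 := by
    intro β hβ
    have h1 : (β ^ 4 + φ a3 * β + φ a4) ^ q = 0 := by rw [hβ]; exact zero_pow hq0
    rw [hadd1, hadd1, mul_pow, hφq, hφq, pow_right_comm] at h1
    exact h1
  have hrooti : ∀ i : ℕ, (α₀ ^ q ^ i) ^ 4 + φ a3 * α₀ ^ q ^ i + φ a4 = 0 := by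
    intro i
    induction i with
    | zero => simpa using hroot0
    | succ n ih => rw [hppow n]; exact hstab _ ih
  -- minimal polynomial
  have haev : (aeval α₀) P = 0 := by
    rw [hP]
    simpa [map_add, map_pow, map_mul, aeval_X, aeval_C] using hroot0
  have hμ : minpoly F α₀ = P := (minpoly.eq_of_irreducible_of_monic hirr haev hPmonic).symm
  have hlow : ∀ g : F[X], g.degree < 4 → (aeval α₀) g = 0 → g = 0 := by
    intro g hdeg hg
    by_contra hne
    have hdvd := minpoly.dvd F α₀ hg
    rw [hμ] at hdvd
    have hle := degree_le_of_dvd hdvd hne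
    rw [hPdeg] at hle
    exact absurd (lt_of_le_of_lt hle hdeg) (lt_irrefl _)
  -- no small Frobenius period
  have hdist : ∀ d : ℕ, 0 < d → d < 4 → α₀ ^ q ^ d ≠ α₀ := by
    intro d hd0 hd4 heq
    set f : F × F × F × F → K :=
      fun p => φ p.1 + φ p.2.1 * α₀ + φ p.2.2.1 * α₀ ^ 2 + φ p.2.2.2 * α₀ ^ 3 with hf
    have hfinj : Function.Injective f := by
      rintro ⟨w1, x1, y1, z1⟩ ⟨w2, x2, y2, z2⟩ hfeq
      simp only [hf] at hfeq
      set g : F[X] := C (w1 - w2) + C (x1 - x2) * X ^ 1 + C (y1 - y2) * X ^ 2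
        + C (z1 - z2) * X ^ 3 with hg
      have hg0 : (aeval α₀) g = 0 := by
        rw [hg]
        simp only [map_add, map_mul, map_pow, aeval_X, aeval_C, map_sub]
        linear_combination hfeq
      have hgdeg : g.degree < 4 := by
        have hle : g.degree ≤ 3 := by rw [hg]; compute_degree
        exact lt_of_le_of_lt hle (by norm_num)
      have hgz := hlow g hgdeg hg0
      rw [hg] at hgz
      have c0 := congrArg (fun p => coeff p 0) hgz
      have c1 := congrArg (fun p => coeff p 1) hgz
      have c2 := congrArg (fun p => coeff p 2) hgz
      have c3 := congrArg (fun p => coeff p 3) hgz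
      simp only [coeff_add, coeff_C_mul, coeff_X_pow, coeff_C, coeff_zero] at c0 c1 c2 c3
      norm_num at c0 c1 c2 c3
      exact Prod.ext (sub_eq_zero.mp c0) (Prod.ext (sub_eq_zero.mp c1)
        (Prod.ext (sub_eq_zero.mp c2) (sub_eq_zero.mp c3)))
    set n : ℕ := q ^ d with hn
    have hn1 : 1 < n := Nat.one_lt_pow (by omega) hq1
    set g2 : K[X] := X ^ n - X with hg2
    have hg2ne : g2 ≠ 0 := FiniteField.X_pow_card_sub_X_ne_zero K hn1
    have himg : Finset.univ.image f ⊆ g2.roots.toFinset := by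
      intro x hx
      rw [Finset.mem_image] at hx
      obtain ⟨p, -, rfl⟩ := hx
      rw [Multiset.mem_toFinset, mem_roots hg2ne]
      have hfix : f p ^ n = f p := by
        obtain ⟨w, x, y, z⟩ := p
        simp only [hf, hn]
        rw [haddp d, haddp d, haddp d, mul_pow, mul_pow, mul_pow,
          hφfix d, hφfix d, hφfix d, hφfix d,
          pow_right_comm α₀ 2, pow_right_comm α₀ 3, heq]
      simp [hg2, IsRoot.def, hfix]
    have hcard1 : (Finset.univ.image f).card = q ^ 4 := by
      rw [Finset.card_image_of_injective _ hfinj, Finset.card_univ]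
      simp only [Fintype.card_prod, hcard]
      ring
    have hcard2 : g2.roots.toFinset.card ≤ n :=
      le_trans (Multiset.toFinset_card_le _) (le_trans (card_roots' _)
        (le_of_eq (by rw [hg2]; exact FiniteField.X_pow_card_sub_X_natDegree_eq K hn1)))
    have hle : q ^ 4 ≤ q ^ d := by
      rw [← hcard1, ← hn]
      exact le_trans (Finset.card_le_card himg) hcard2
    have := (Nat.pow_le_pow_iff_right hq1).mp hle
    omega
  -- the four roots
  set α₁ : K := α₀ ^ q with hα1
  set α₂ : K := α₁ ^ q with hα2
  set α₃ : K := α₂ ^ q with hα3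
  have hα1e : α₁ = α₀ ^ q ^ 1 := by rw [hα1, pow_one]
  have hα2e : α₂ = α₀ ^ q ^ 2 := by rw [hα2, hα1e, ← hppow]
  have hα3e : α₃ = α₀ ^ q ^ 3 := by rw [hα3, hα2e, ← hppow]
  have hr0 : α₀ ^ 4 + φ a3 * α₀ + φ a4 = 0 := hroot0
  have hr1 : α₁ ^ 4 + φ a3 * α₁ + φ a4 = 0 := by rw [hα1e]; exact hrooti 1
  have hr2 : α₂ ^ 4 + φ a3 * α₂ + φ a4 = 0 := by rw [hα2e]; exact hrooti 2
  have hr3 : α₃ ^ 4 + φ a3 * α₃ + φ a4 = 0 := by rw [hα3e]; exact hrooti 3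
  have hD : ∀ i j : ℕ, i < j → j < 4 → α₀ ^ q ^ i ≠ α₀ ^ q ^ j := by
    intro i j hij hj4 heq
    have hj : j = (j - i) + i := by omega
    rw [hj, hsplit α₀ i (j - i)] at heq
    exact hdist (j - i) (by omega) (by omega) (powinj i heq).symm
  have hne01 : α₀ ≠ α₁ := by
    intro hh
    exact hD 0 1 (by norm_num) (by norm_num)
      (by simp only [pow_zero, pow_one]; rw [← hα1]; exact hh)
  have hne02 : α₀ ≠ α₂ := by
    intro hh
    exact hD 0 2 (by norm_num) (by norm_num)
      (by simp only [pow_zero, pow_one]; rw [← hα2e]; exact hh)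
  have hne03 : α₀ ≠ α₃ := by
    intro hh
    exact hD 0 3 (by norm_num) (by norm_num)
      (by simp only [pow_zero, pow_one]; rw [← hα3e]; exact hh)
  have hne12 : α₁ ≠ α₂ := by
    intro hh
    exact hD 1 2 (by norm_num) (by norm_num) (by rw [← hα1e, ← hα2e]; exact hh)
  have hne13 : α₁ ≠ α₃ := by
    intro hh
    exact hD 1 3 (by norm_num) (by norm_num) (by rw [← hα1e, ← hα3e]; exact hh)
  have hne23 : α₂ ≠ α₃ := by
    intro hh
    exact hD 2 3 (by norm_num) (by norm_num) (by rw [← hα2e, ← hα3e]; exact hh)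
  -- factorization over K
  set Pc : K[X] := X ^ 4 + C (φ a3) * X + C (φ a4) with hPc
  set Qc : K[X] := (X - C α₀) * (X - C α₁) * (X - C α₂) * (X - C α₃) with hQc
  have hQm : Qc.Monic := by
    rw [hQc]
    exact (((monic_X_sub_C α₀).mul (monic_X_sub_C α₁)).mul (monic_X_sub_C α₂)).mul
      (monic_X_sub_C α₃)
  have hQdeg : Qc.degree = 4 := by
    rw [hQc]
    rw [degree_mul, degree_mul, degree_mul, degree_X_sub_C, degree_X_sub_C, degree_X_sub_C,
      degree_X_sub_C]
    rfl
  have hPclowdeg : (C (φ a3) * X + C (φ a4) : K[X]).degree < (X ^ 4 : K[X]).degree := by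
    rw [degree_X_pow]
    refine lt_of_le_of_lt (degree_add_le _ _) ?_
    refine max_lt (lt_of_le_of_lt (degree_mul_le _ _) ?_) (lt_of_le_of_lt (degree_C_le) ?_)
    · refine lt_of_le_of_lt (add_le_add degree_C_le (le_of_eq degree_X)) ?_
      norm_num
    · norm_num
  have hPcassoc : Pc = X ^ 4 + (C (φ a3) * X + C (φ a4)) := by rw [hPc, add_assoc]
  have hPcm : Pc.Monic := by rw [hPcassoc]; exact (monic_X_pow 4).add_of_left hPclowdeg
  have hPcdeg : Pc.degree = 4 := by
    rw [hPcassoc, degree_add_eq_left_of_degree_lt hPclowdeg, degree_X_pow]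
    norm_num
  have hPceval : ∀ β : K, Pc.eval β = β ^ 4 + φ a3 * β + φ a4 := by
    intro β; rw [hPc]; simp
  have hQceval : ∀ β : K, Qc.eval β = (β - α₀) * (β - α₁) * (β - α₂) * (β - α₃) := by
    intro β; rw [hQc]; simp
  have hPQ : Pc = Qc := by
    by_contra hne
    have hDne : Pc - Qc ≠ 0 := sub_ne_zero.mpr hne
    have hDdeg : (Pc - Qc).degree < 4 := by
      have := degree_sub_lt (show Pc.degree = Qc.degree by rw [hPcdeg, hQdeg]) hPcm.ne_zero
        (show Pc.leadingCoeff = Qc.leadingCoeff by rw [hPcm.leadingCoeff, hQm.leadingCoeff])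
      rwa [hPcdeg] at this
    have hDnat : (Pc - Qc).natDegree < 4 :=
      (natDegree_lt_iff_degree_lt hDne).mpr (by exact_mod_cast hDdeg)
    have hroots : ({α₀, α₁, α₂, α₃} : Finset K) ⊆ (Pc - Qc).roots.toFinset := by
      intro x hx
      rw [Multiset.mem_toFinset, mem_roots hDne]
      have hx' : x = α₀ ∨ x = α₁ ∨ x = α₂ ∨ x = α₃ := by simpa using hx
      have hxP : Pc.eval x = 0 := by
        rw [hPceval]
        rcases hx' with rfl | rfl | rfl | rfl <;> assumption
      have hxQ : Qc.eval x = 0 := by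
        rw [hQceval]
        rcases hx' with rfl | rfl | rfl | rfl <;> simp
      simp [IsRoot.def, eval_sub, hxP, hxQ]
    have hcard4 : ({α₀, α₁, α₂, α₃} : Finset K).card = 4 := by
      rw [Finset.card_insert_of_notMem (by simp [hne01, hne02, hne03]),
        Finset.card_insert_of_notMem (by simp [hne12, hne13]),
        Finset.card_insert_of_notMem (by simp [hne23]), Finset.card_singleton]
    have : 4 ≤ (Pc - Qc).natDegree :=
      le_trans (le_trans (le_of_eq hcard4.symm) (Finset.card_le_card hroots))
        (le_trans (Multiset.toFinset_card_le _) (card_roots' _))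
    omega
  have hrootchar : ∀ β : K, β ^ 4 + φ a3 * β + φ a4 = 0 →
      β = α₀ ∨ β = α₁ ∨ β = α₂ ∨ β = α₃ := by
    intro β hβ
    have hQ0 : Qc.eval β = 0 := by rw [← hPQ, hPceval]; exact hβ
    rw [hQceval] at hQ0
    rcases mul_eq_zero.mp hQ0 with h' | h'
    · rcases mul_eq_zero.mp h' with h'' | h''
      · rcases mul_eq_zero.mp h'' with h3 | h3
        · exact Or.inl (sub_eq_zero.mp h3)
        · exact Or.inr (Or.inl (sub_eq_zero.mp h3))
      · exact Or.inr (Or.inr (Or.inl (sub_eq_zero.mp h'')))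
    · exact Or.inr (Or.inr (Or.inr (sub_eq_zero.mp h')))
  -- Frobenius closes the orbit
  have hα3q : α₃ ^ q = α₀ := by
    rcases hrootchar (α₃ ^ q) (hstab _ hr3) with hh | hh | hh | hh
    · exact hh
    · exact absurd (powinj1 (by rw [hh, hα1])) hne03.symm
    · exact absurd (powinj1 (by rw [hh, hα2])) hne13.symm
    · exact absurd (powinj1 (by rw [hh, hα3])) hne23.symm
  have hα04 : α₀ ^ q ^ 4 = α₀ := by
    rw [show (4 : ℕ) = 3 + 1 from rfl, hppow, ← hα3e, hα3q]
  have horbit : ∀ (x : K), x ^ q ^ 4 = x → ∀ i : ℕ, x ^ q ^ (4 + i) = x ^ q ^ i := by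
    intro x hx i; rw [hsplit x i 4, hx]
  -- coefficient equations
  have hexp : Qc = X ^ 4 - C (α₀ + α₁ + α₂ + α₃) * X ^ 3
      + C (α₀ * α₁ + α₀ * α₂ + α₀ * α₃ + α₁ * α₂ + α₁ * α₃ + α₂ * α₃) * X ^ 2
      - C (α₀ * α₁ * α₂ + α₀ * α₁ * α₃ + α₀ * α₂ * α₃ + α₁ * α₂ * α₃) * X
      + C (α₀ * α₁ * α₂ * α₃) := by
    rw [hQc]
    simp only [C_add, C_mul]
    ring
  have hPQ2 : X ^ 4 + C (φ a3) * X + C (φ a4) = X ^ 4 - C (α₀ + α₁ + α₂ + α₃) * X ^ 3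
      + C (α₀ * α₁ + α₀ * α₂ + α₀ * α₃ + α₁ * α₂ + α₁ * α₃ + α₂ * α₃) * X ^ 2
      - C (α₀ * α₁ * α₂ + α₀ * α₁ * α₃ + α₀ * α₂ * α₃ + α₁ * α₂ * α₃) * X
      + C (α₀ * α₁ * α₂ * α₃) := by
    rw [← hPc, hPQ, hexp]
  have hc3 := congrArg (fun p => coeff p 3) hPQ2
  have hc2 := congrArg (fun p => coeff p 2) hPQ2
  have hc0 := congrArg (fun p => coeff p 0) hPQ2
  simp only [coeff_add, coeff_sub, coeff_C_mul, coeff_X_pow, coeff_C, coeff_X] at hc3 hc2 hc0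
  norm_num at hc3 hc2 hc0
  have he1 : α₀ + α₁ + α₂ + α₃ = 0 := by linear_combination hc3
  have he2 : α₀ * α₁ + α₀ * α₂ + α₀ * α₃ + α₁ * α₂ + α₁ * α₃ + α₂ * α₃ = 0 := by
    linear_combination -hc2
  have he0 : α₀ * α₁ * α₂ * α₃ = φ a4 := by linear_combination -hc0
  -- the discriminant
  set δ : K := (α₀ - α₁) * (α₀ - α₂) * (α₀ - α₃) * ((α₁ - α₂) * (α₁ - α₃) * (α₂ - α₃))
    with hδdef
  have hδne : δ ≠ 0 := by
    rw [hδdef]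
    exact mul_ne_zero (mul_ne_zero (mul_ne_zero (sub_ne_zero.mpr hne01)
      (sub_ne_zero.mpr hne02)) (sub_ne_zero.mpr hne03))
      (mul_ne_zero (mul_ne_zero (sub_ne_zero.mpr hne12) (sub_ne_zero.mpr hne13))
      (sub_ne_zero.mpr hne23))
  have hsub1 : ∀ x y : K, (x - y) ^ q = x ^ q - y ^ q := by
    intro x y; have := hsubp 1 x y; simpa using this
  have hneg1 : ∀ x : K, (-x) ^ q = -(x ^ q) := by
    intro x; have := hnegp 1 x; simpa using this
  have hδq : δ ^ q = -δ := by
    rw [hδdef]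
    simp only [mul_pow, hsub1]
    rw [← hα1, ← hα2, ← hα3, hα3q]
    ring
  have e1' : α₂ + α₃ = -(α₀ + α₁) := by linear_combination he1
  have e2' : α₂ * α₃ = (α₀ + α₁) ^ 2 - α₀ * α₁ := by
    linear_combination he2 - (α₀ + α₁) * e1'
  have hA : (α₂ - α₃) ^ 2 = α₀ * α₁ := by
    linear_combination (α₂ + α₃ - (α₀ + α₁)) * e1' - 4 * e2'
      + (α₀ * α₁ - (α₀ + α₁) ^ 2) * hchar3
  have hB : (α₀ - α₁) ^ 2 = (α₀ + α₁) ^ 2 - α₀ * α₁ := by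
    linear_combination (-(α₀ * α₁)) * hchar3
  have hM0 : (α₀ - α₂) * (α₀ - α₃)
      = α₀ ^ 2 + (α₀ + α₁) * α₀ + ((α₀ + α₁) ^ 2 - α₀ * α₁) := by
    linear_combination (-α₀) * e1' + e2'
  have hM1 : (α₁ - α₂) * (α₁ - α₃)
      = α₁ ^ 2 + (α₀ + α₁) * α₁ + ((α₀ + α₁) ^ 2 - α₀ * α₁) := by
    linear_combination (-α₁) * e1' + e2'
  have hM : (α₀ ^ 2 + (α₀ + α₁) * α₀ + ((α₀ + α₁) ^ 2 - α₀ * α₁))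
      * (α₁ ^ 2 + (α₀ + α₁) * α₁ + ((α₀ + α₁) ^ 2 - α₀ * α₁))
      = (α₀ * α₁) ^ 2 - (α₀ + α₁) ^ 2 * (α₀ * α₁) := by
    linear_combination ((α₀ * α₁) ^ 2 + (α₀ + α₁) ^ 4 - (α₀ + α₁) ^ 2 * (α₀ * α₁)) * hchar3
  have hwv : α₀ * α₁ * ((α₀ + α₁) ^ 2 - α₀ * α₁) = φ a4 := by
    rw [← e2']
    linear_combination he0
  have hδ2 : δ ^ 2 = φ a4 ^ 3 := by
    calc δ ^ 2 = (α₀ - α₁) ^ 2 * (α₂ - α₃) ^ 2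
        * (((α₀ - α₂) * (α₀ - α₃)) * ((α₁ - α₂) * (α₁ - α₃))) ^ 2 := by rw [hδdef]; ring
      _ = ((α₀ + α₁) ^ 2 - α₀ * α₁) * (α₀ * α₁)
        * ((α₀ * α₁) ^ 2 - (α₀ + α₁) ^ 2 * (α₀ * α₁)) ^ 2 := by rw [hB, hA, hM0, hM1, hM]
      _ = (α₀ * α₁ * ((α₀ + α₁) ^ 2 - α₀ * α₁)) ^ 3 := by ring
      _ = φ a4 ^ 3 := by rw [hwv]
  -- a4 is a nonsquare in F
  have hkey : ∀ t : F, t ^ 2 ≠ a4 := by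
    intro t ht
    have h6 : δ ^ 2 = φ t ^ 6 := by
      rw [hδ2, ← ht, map_pow]
      ring
    have hsplit0 : (δ - φ t ^ 3) * (δ + φ t ^ 3) = 0 := by linear_combination h6
    have hδfix : δ ^ q = δ := by
      rcases mul_eq_zero.mp hsplit0 with hc | hc
      · have hc' : δ = φ t ^ 3 := by linear_combination hc
        rw [hc', ← map_pow, hφq]
      · have hc' : δ = -(φ t ^ 3) := by linear_combination hc
        rw [hc', hneg1, ← map_pow, hφq]
    have hdd : δ = -δ := by rw [← hδq, hδfix]
    have h2δ : δ + δ = 0 := by linear_combination hdd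
    have h3δ : δ + δ + δ = 0 := by linear_combination δ * hchar3
    have : δ = 0 := by linear_combination h3δ - h2δ
    exact hδne this
  -- elements fixed by Frobenius are in the image of F
  have hfixq : ∀ x : K, x ^ q = x → ∃ t : F, φ t = x := by
    intro x hx
    set g2 : K[X] := X ^ q - X with hg2
    have hg2ne : g2 ≠ 0 := FiniteField.X_pow_card_sub_X_ne_zero K hq1
    have himg : Finset.univ.image (fun t : F => φ t) ⊆ g2.roots.toFinset := by
      intro y hy
      rw [Finset.mem_image] at hy
      obtain ⟨t, -, rfl⟩ := hy
      rw [Multiset.mem_toFinset, mem_roots hg2ne]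
      simp [hg2, IsRoot.def, hφq t]
    have hcard1 : (Finset.univ.image (fun t : F => φ t)).card = q := by
      rw [Finset.card_image_of_injective _ φinj, Finset.card_univ, hcard]
    have hcard2 : g2.roots.toFinset.card ≤ q :=
      le_trans (Multiset.toFinset_card_le _) (le_trans (card_roots' _)
        (le_of_eq (by rw [hg2]; exact FiniteField.X_pow_card_sub_X_natDegree_eq K hq1)))
    have heqs : Finset.univ.image (fun t : F => φ t) = g2.roots.toFinset :=
      Finset.eq_of_subset_of_card_le himg (by rw [hcard1]; exact hcard2)
    have hx' : x ∈ g2.roots.toFinset := by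
      rw [Multiset.mem_toFinset, mem_roots hg2ne]
      simp [hg2, IsRoot.def, hx]
    rw [← heqs, Finset.mem_image] at hx'
    obtain ⟨t, -, ht⟩ := hx'
    exact ⟨t, ht⟩
  have hfrobmul : ∀ (x : K) (i : ℕ), (x ^ q ^ i) ^ q = x ^ q ^ (i + 1) :=
    fun x i => (hppow i x).symm
  have hnorm4 : ∀ x : K, x ^ q ^ 4 = x →
      (x * x ^ q ^ 1 * x ^ q ^ 2 * x ^ q ^ 3) ^ q
        = x * x ^ q ^ 1 * x ^ q ^ 2 * x ^ q ^ 3 := by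
    intro x hx4
    rw [mul_pow, mul_pow, mul_pow]
    rw [show (x : K) ^ q = x ^ q ^ 1 from by rw [pow_one]]
    rw [hfrobmul x 1, hfrobmul x 2, hfrobmul x 3]
    norm_num
    rw [hx4]
    ring
  have hRHS : ∀ x : K, x ^ q ^ 4 = x → x ^ 8 + φ a3 * x ^ 2 + φ a4 ≠ 0 := by
    intro x hx4 hcon
    have hβ : (x ^ 2) ^ 4 + φ a3 * x ^ 2 + φ a4 = 0 := by linear_combination hcon
    obtain ⟨t, ht⟩ := hfixq _ (hnorm4 x hx4)
    have hu2 : (x * x ^ q ^ 1 * x ^ q ^ 2 * x ^ q ^ 3) ^ 2 = φ a4 := by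
      have hstep : (x * x ^ q ^ 1 * x ^ q ^ 2 * x ^ q ^ 3) ^ 2
          = (x ^ 2) * ((x ^ 2) ^ q ^ 1) * ((x ^ 2) ^ q ^ 2) * ((x ^ 2) ^ q ^ 3) := by
        rw [pow_right_comm x 2 (q ^ 1), pow_right_comm x 2 (q ^ 2),
          pow_right_comm x 2 (q ^ 3)]
        ring
      rw [hstep]
      rcases hrootchar _ hβ with hcase | hcase | hcase | hcase
      · rw [hcase, ← hα1e, ← hα2e, ← hα3e]
        exact he0
      · rw [hcase, hα1e, ← hsplit α₀ 1 1, ← hsplit α₀ 2 1, ← hsplit α₀ 3 1,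
          show (1 : ℕ) + 1 = 2 from rfl, show (1 : ℕ) + 2 = 3 from rfl,
          show (1 : ℕ) + 3 = 4 + 0 from rfl, horbit α₀ hα04 0, pow_zero, pow_one α₀,
          ← hα2e, ← hα3e, ← hα1e]
        linear_combination he0
      · rw [hcase, hα2e, ← hsplit α₀ 1 2, ← hsplit α₀ 2 2, ← hsplit α₀ 3 2,
          show (2 : ℕ) + 1 = 3 from rfl, show (2 : ℕ) + 2 = 4 + 0 from rfl,
          show (2 : ℕ) + 3 = 4 + 1 from rfl, horbit α₀ hα04 0, horbit α₀ hα04 1,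
          pow_zero, pow_one α₀, ← hα3e, ← hα1e, ← hα2e]
        linear_combination he0
      · rw [hcase, hα3e, ← hsplit α₀ 1 3, ← hsplit α₀ 2 3, ← hsplit α₀ 3 3,
          show (3 : ℕ) + 1 = 4 + 0 from rfl, show (3 : ℕ) + 2 = 4 + 1 from rfl,
          show (3 : ℕ) + 3 = 4 + 2 from rfl, horbit α₀ hα04 0, horbit α₀ hα04 1,
          horbit α₀ hα04 2, pow_zero, pow_one α₀, ← hα1e, ← hα2e, ← hα3e]
        linear_combination he0
    have : t ^ 2 = a4 := φinj (by rw [map_pow, ht]; exact hu2)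
    exact hkey t this
  -- LHS : the set is a single Frobenius orbit
  set c : F := A₅ / A₄ with hc
  set S : Set K := {z : K | ∃ α : K, α ^ 4 + φ a3 * α + φ a4 = 0
    ∧ ∃ s : K, s ^ 2 = -(φ c) * α ∧ z = -α + s} with hS
  have hLHS : ∃ b ∈ S, S = Set.range fun i : ℕ => b ^ q ^ i := by
    rcases eq_or_ne c 0 with hc0 | hc0
    · refine ⟨-α₀, ⟨α₀, hroot0, 0, by rw [hc0, map_zero]; ring, by ring⟩, ?_⟩
      rw [hS]
      ext z
      simp only [Set.mem_setOf_eq, Set.mem_range]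
      constructor
      · rintro ⟨β, hβ, s', hs', rfl⟩
        have hs'0 : s' = 0 := by
          have h0 : s' ^ 2 = 0 := by rw [hs', hc0, map_zero]; ring
          exact pow_eq_zero_iff (two_ne_zero) |>.mp h0
        subst hs'0
        rcases hrootchar β hβ with rfl | rfl | rfl | rfl
        · exact ⟨0, by simp⟩
        · exact ⟨1, by rw [pow_one, hneg1, ← hα1]; ring⟩
        · exact ⟨2, by rw [hnegp 2, ← hα2e]; ring⟩
        · exact ⟨3, by rw [hnegp 3, ← hα3e]; ring⟩
      · rintro ⟨i, rfl⟩
        exact ⟨α₀ ^ q ^ i, hrooti i, 0, by rw [hc0, map_zero]; ring, by rw [hnegp i]; ring⟩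
    · have hα₀ne : α₀ ≠ 0 := by
        intro h0
        rw [h0] at hroot0
        have hz : φ a4 = 0 := by linear_combination hroot0
        exact ha4 (φinj (by rw [hz, map_zero]))
      have hφc : φ c ≠ 0 := fun hh => hc0 (φinj (by rw [hh, map_zero]))
      obtain ⟨s₀, hs₀⟩ := IsAlgClosed.exists_pow_nat_eq (-(φ c) * α₀) (n := 2) (by norm_num)
      have hss : ∀ i : ℕ, (s₀ ^ q ^ i) ^ 2 = -(φ c) * α₀ ^ q ^ i := by
        intro i
        rw [pow_right_comm s₀ (q ^ i) 2, hs₀, mul_pow, hnegp i, hφfix i]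
      have hs4 : s₀ ^ q ^ 4 = -s₀ := by
        have hsq : (s₀ ^ q ^ 4) ^ 2 = s₀ ^ 2 := by rw [hss 4, hα04, hs₀]
        have hfac : (s₀ ^ q ^ 4 - s₀) * (s₀ ^ q ^ 4 + s₀) = 0 := by linear_combination hsq
        rcases mul_eq_zero.mp hfac with hcc | hcc
        · exfalso
          have hfix : s₀ ^ q ^ 4 = s₀ := by linear_combination hcc
          obtain ⟨t, ht⟩ := hfixq _ (hnorm4 s₀ hfix)
          have hu2 : (s₀ * s₀ ^ q ^ 1 * s₀ ^ q ^ 2 * s₀ ^ q ^ 3) ^ 2 = φ (c ^ 4 * a4) := by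
            have hstep : (s₀ * s₀ ^ q ^ 1 * s₀ ^ q ^ 2 * s₀ ^ q ^ 3) ^ 2
                = (s₀ ^ 2) * ((s₀ ^ q ^ 1) ^ 2) * ((s₀ ^ q ^ 2) ^ 2) * ((s₀ ^ q ^ 3) ^ 2) := by
              ring
            rw [hstep, hs₀, hss 1, hss 2, hss 3, ← hα1e, ← hα2e, ← hα3e, map_mul, map_pow]
            linear_combination (φ c) ^ 4 * he0
          have ht2 : t ^ 2 = c ^ 4 * a4 := φinj (by rw [map_pow, ht, hu2])
          refine hkey (t / c ^ 2) ?_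
          field_simp
          linear_combination ht2
        · linear_combination hcc
      refine ⟨-α₀ + s₀, ⟨α₀, hroot0, s₀, hs₀, rfl⟩, ?_⟩
      have hbpow : ∀ i : ℕ, (-α₀ + s₀) ^ q ^ i = -(α₀ ^ q ^ i) + s₀ ^ q ^ i := by
        intro i; rw [haddp i, hnegp i]
      rw [hS]
      ext z
      simp only [Set.mem_setOf_eq, Set.mem_range]
      constructor
      · rintro ⟨β, hβ, s', hs', rfl⟩
        have hj : ∃ j : ℕ, β = α₀ ^ q ^ j := by
          rcases hrootchar β hβ with rfl | rfl | rfl | rfl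
          exacts [⟨0, by simp⟩, ⟨1, hα1e⟩, ⟨2, hα2e⟩, ⟨3, hα3e⟩]
        obtain ⟨j, rfl⟩ := hj
        have hfac : (s' - s₀ ^ q ^ j) * (s' + s₀ ^ q ^ j) = 0 := by
          linear_combination hs' - hss j
        rcases mul_eq_zero.mp hfac with hcc | hcc
        · have hs'e : s' = s₀ ^ q ^ j := by linear_combination hcc
          exact ⟨j, by rw [hbpow j, hs'e]⟩
        · have hs'e : s' = -(s₀ ^ q ^ j) := by linear_combination hcc
          refine ⟨4 + j, ?_⟩
          rw [hbpow (4 + j), horbit α₀ hα04 j, hsplit s₀ j 4, hs4, hnegp j, hs'e]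
      · rintro ⟨i, rfl⟩
        exact ⟨α₀ ^ q ^ i, hrooti i, s₀ ^ q ^ i, hss i, by rw [hbpow i]⟩

  exact iff_of_true hLHS hRHS
end

section
/- Let q = 3^h with h even, and let c be a non-square generator power, specifically c = g^η with g a generator of F_q* and η odd. Then x^8 + 2c is irreducible over F_q, and consequently F(x) = x^9 + 2cx is a permutation polynomial of F_{q^k} for every k with x^8 + 2c having no root in F_{q^k}; in particular F is exceptional over F_q. -/
open Polynomial MvPolynomial

section AuxLemmas

variable {K : Type*} [Field K]

private lemma aux_finSuccEquiv_C (n : ℕ) (r : K) :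
    MvPolynomial.finSuccEquiv K n (MvPolynomial.C r) = Polynomial.C (MvPolynomial.C r) := by
  simp [MvPolynomial.finSuccEquiv_apply]

private lemma aux_isUnit_eq_C {u : MvPolynomial (Fin 2) K} (hu : IsUnit u) :
    ∃ w : K, w ≠ 0 ∧ u = MvPolynomial.C w := by
  have h1 : IsUnit (MvPolynomial.finSuccEquiv K 1 u) := hu.map _
  rw [Polynomial.isUnit_iff] at h1
  obtain ⟨r, hr, hru⟩ := h1
  have h2 : IsUnit (MvPolynomial.finSuccEquiv K 0 r) := hr.map _
  rw [Polynomial.isUnit_iff] at h2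
  obtain ⟨s, hs, hsr⟩ := h2
  obtain ⟨w, rfl⟩ := MvPolynomial.C_surjective (Fin 0) s
  have hr' : r = MvPolynomial.C w := by
    apply (MvPolynomial.finSuccEquiv K 0).injective
    rw [← hsr, aux_finSuccEquiv_C]
  subst hr'
  have hu' : u = MvPolynomial.C w := by
    apply (MvPolynomial.finSuccEquiv K 1).injective
    rw [← hru, aux_finSuccEquiv_C]
  refine ⟨w, ?_, hu'⟩
  rintro rfl
  rw [map_zero] at hu'
  rw [hu'] at hu
  exact not_isUnit_zero hu

private lemma aux_prime_X0 : Prime (MvPolynomial.X 0 : MvPolynomial (Fin 2) K) := by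
  rw [← MulEquiv.prime_iff (MvPolynomial.finSuccEquiv K 1).toMulEquiv]
  have : (MvPolynomial.finSuccEquiv K 1).toMulEquiv (MvPolynomial.X 0)
      = (Polynomial.X : Polynomial (MvPolynomial (Fin 1) K)) := MvPolynomial.finSuccEquiv_X_zero
  rw [this]
  exact Polynomial.prime_X

private lemma aux_irred_linear (r : K) :
    Irreducible (MvPolynomial.X 0 - MvPolynomial.X 1 - MvPolynomial.C r :
      MvPolynomial (Fin 2) K) := by
  classical
  let f : MvPolynomial (Fin 2) K →ₐ[K] MvPolynomial (Fin 2) K :=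
    MvPolynomial.aeval (fun i : Fin 2 =>
      if i = 0 then MvPolynomial.X 0 - MvPolynomial.X 1 - MvPolynomial.C r else MvPolynomial.X 1)
  let g : MvPolynomial (Fin 2) K →ₐ[K] MvPolynomial (Fin 2) K :=
    MvPolynomial.aeval (fun i : Fin 2 =>
      if i = 0 then MvPolynomial.X 0 + MvPolynomial.X 1 + MvPolynomial.C r else MvPolynomial.X 1)
  have hfg : f.comp g = AlgHom.id K _ := by
    apply MvPolynomial.algHom_ext
    intro i
    fin_cases i <;>
      · simp [f, g, MvPolynomial.algebraMap_eq]; try ring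
  have hgf : g.comp f = AlgHom.id K _ := by
    apply MvPolynomial.algHom_ext
    intro i
    fin_cases i <;>
      · simp [f, g, MvPolynomial.algebraMap_eq]; try ring
  let e : MvPolynomial (Fin 2) K ≃ₐ[K] MvPolynomial (Fin 2) K :=
    AlgEquiv.ofAlgHom f g hfg hgf
  have he : e.toMulEquiv (MvPolynomial.X 0)
      = MvPolynomial.X 0 - MvPolynomial.X 1 - MvPolynomial.C r := by
    show e (MvPolynomial.X 0) = _
    simp [e, f, AlgEquiv.ofAlgHom]
  have hp0 := (MulEquiv.prime_iff e.toMulEquiv).mpr (aux_prime_X0 (K := K))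
  rw [he] at hp0
  exact hp0.irreducible

end AuxLemmas

open IntermediateField in
private lemma aux_irred8 {F : Type*} [Field F] [Fintype F] [CharP F 3] (h η : ℕ)
    (hcard : Fintype.card F = 3 ^ h) (hh : Even h) (hη : Odd η)
    (g : F) (hg : ∀ x : F, x ≠ 0 → ∃ i : ℕ, g ^ i = x)
    (c : F) (hc : c = g ^ η) :
    Irreducible (Polynomial.X ^ 8 - Polynomial.C c : F[X]) := by
  classical
  have h2 : (2 : F) ≠ 0 := by
    intro h0
    exact (by norm_num : ¬ ((3:ℕ) ∣ 2))
      ((CharP.cast_eq_zero_iff F 3 2).mp (by exact_mod_cast h0))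
  have hg0 : g ≠ 0 := by
    rintro rfl
    obtain ⟨i, hi⟩ := hg (-1) (by simp)
    rcases Nat.eq_zero_or_pos i with rfl | hipos
    · rw [pow_zero] at hi
      exact h2 (by linear_combination hi)
    · rw [zero_pow hipos.ne'] at hi
      exact h2 (by linear_combination 2 * hi)
  have hc0 : c ≠ 0 := hc ▸ pow_ne_zero _ hg0
  have h8 : 8 ∣ Fintype.card F - 1 := by
    obtain ⟨m, rfl⟩ := hh
    have h9 : (9:ℕ) ^ m ≡ 1 ^ m [MOD 8] := Nat.ModEq.pow m (by decide)
    rw [one_pow] at h9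
    have : (3:ℕ) ^ (m + m) = 9 ^ m := by
      rw [pow_add, ← mul_pow]; norm_num
    rw [hcard, this]
    exact (Nat.modEq_iff_dvd' (Nat.one_le_pow _ _ (by norm_num))).mp h9.symm
  set u : Fˣ := Units.mk0 g hg0 with hu_def
  have hu : ∀ v : Fˣ, v ∈ Subgroup.zpowers u := by
    intro v
    obtain ⟨j, hj⟩ := hg v.val v.ne_zero
    exact ⟨(j : ℤ), by ext; simp [hu_def, hj]⟩
  have horder : orderOf u = Fintype.card F - 1 := by
    rw [orderOf_eq_card_of_forall_mem_zpowers hu, Nat.card_eq_fintype_card,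
      Fintype.card_units]
  have hnotunit : ¬ IsUnit (Polynomial.X ^ 8 - Polynomial.C c : F[X]) := by
    rw [Polynomial.isUnit_iff_degree_eq_zero, degree_X_pow_sub_C (by norm_num : 0 < 8)]
    norm_num
  obtain ⟨p, hpirr, hpdvd⟩ := WfDvdMonoid.exists_irreducible_factor hnotunit
    (X_pow_sub_C_ne_zero (by norm_num) c)
  suffices hdeg : p.natDegree = 8 by
    exact (associated_of_dvd_of_natDegree_le hpdvd (X_pow_sub_C_ne_zero (by norm_num) c)
      (hdeg.trans natDegree_X_pow_sub_C.symm).ge).irreducible hpirr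
  haveI : Fact (Irreducible p) := ⟨hpirr⟩
  have key : (Algebra.norm F (AdjoinRoot.root p)) ^ 8 = c ^ p.natDegree := by
    have := eval₂_eq_zero_of_dvd_of_eval₂_eq_zero _ _ hpdvd (AdjoinRoot.eval₂_root p)
    rw [Polynomial.eval₂_sub, Polynomial.eval₂_pow, Polynomial.eval₂_C, Polynomial.eval₂_X, sub_eq_zero] at this
    rw [← map_pow, this, ← AdjoinRoot.algebraMap_eq, Algebra.norm_algebraMap,
      ← finrank_top', ← IntermediateField.adjoin_root_eq_top p,
      IntermediateField.adjoin.finrank,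
      AdjoinRoot.minpoly_root hpirr.ne_zero, natDegree_mul_C]
    · simpa using hpirr.ne_zero
    · exact AdjoinRoot.isIntegral_root hpirr.ne_zero
  set N := Algebra.norm F (AdjoinRoot.root p) with hN_def
  have hN0 : N ≠ 0 := by
    intro h0
    rw [h0, zero_pow (by norm_num : (8:ℕ) ≠ 0)] at key
    exact pow_ne_zero _ hc0 key.symm
  obtain ⟨i, hi⟩ := hg N hN0
  have hkey2 : u ^ (8 * i) = u ^ (η * p.natDegree) := by
    ext
    push_cast [hu_def]
    calc g ^ (8 * i) = (g ^ i) ^ 8 := by rw [← pow_mul, Nat.mul_comm]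
    _ = N ^ 8 := by rw [hi]
    _ = c ^ p.natDegree := key
    _ = g ^ (η * p.natDegree) := by rw [hc, ← pow_mul]
  have hmod : 8 * i ≡ η * p.natDegree [MOD Fintype.card F - 1] := by
    rw [← horder]
    exact pow_eq_pow_iff_modEq.mp hkey2
  have hmod8 : 8 * i ≡ η * p.natDegree [MOD 8] := hmod.of_dvd h8
  have h8dvd : 8 ∣ η * p.natDegree := by
    have h0 : (0 : ℕ) ≡ η * p.natDegree [MOD 8] :=
      (Nat.modEq_zero_iff_dvd.mpr ⟨i, rfl⟩).symm.trans hmod8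
    simpa using (Nat.modEq_zero_iff_dvd.mp h0.symm)
  have hcop : Nat.Coprime 8 η := by
    have h2c : Nat.Coprime 2 η := Nat.coprime_two_left.mpr hη
    simpa using Nat.Coprime.pow_left 3 h2c
  have hdvd_d : 8 ∣ p.natDegree := hcop.dvd_of_dvd_mul_left h8dvd
  have hle : p.natDegree ≤ 8 :=
    (natDegree_le_of_dvd hpdvd (X_pow_sub_C_ne_zero (by norm_num) c)).trans_eq
      natDegree_X_pow_sub_C
  exact Nat.le_antisymm hle (Nat.le_of_dvd
    (natDegree_pos_iff_degree_pos.mpr (Polynomial.degree_pos_of_irreducible hpirr)) hdvd_d)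

/-- let `q = 3^h` with `h` even, `g` a generator of `F_q*`, `η` odd and
`c = g^η`. Then `x^8 + 2c` is irreducible over `F_q`; consequently
`F(x) = x^9 + 2cx` is a permutation polynomial of every finite extension `F_{q^k}` in
which `x^8 + 2c` has no root, and in particular `F` is exceptional over `F_q`
(expressed as: the curve `(F(x)−F(y))/(x−y) = 0` has no absolutely irreducible
`F_q`-component other than possibly `x = y`). -/
theorem stmt_19 {F : Type*} [Field F] [Fintype F] (h η : ℕ) [CharP F 3]
    (hcard : Fintype.card F = 3 ^ h) (hh : Even h) (hη : Odd η)
    (g : F) (hg : ∀ x : F, x ≠ 0 → ∃ i : ℕ, g ^ i = x)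
    (c : F) (hc : c = g ^ η)
    (φ : MvPolynomial (Fin 2) F)
    (hφ : (MvPolynomial.X 0 - MvPolynomial.X 1) * φ =
      Polynomial.aeval (MvPolynomial.X 0 : MvPolynomial (Fin 2) F)
        (Polynomial.X ^ 9 + Polynomial.C (2 * c) * Polynomial.X) -
      Polynomial.aeval (MvPolynomial.X 1 : MvPolynomial (Fin 2) F)
        (Polynomial.X ^ 9 + Polynomial.C (2 * c) * Polynomial.X)) :
    Irreducible (Polynomial.X ^ 8 + Polynomial.C (2 * c) : F[X]) ∧
    (∀ (E : Type) [Field E] [Fintype E] [Algebra F E],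
      (∀ x : E, x ^ 8 + algebraMap F E (2 * c) ≠ 0) →
      Function.Bijective (fun x : E => x ^ 9 + algebraMap F E (2 * c) * x)) ∧
    ¬ ∃ k : MvPolynomial (Fin 2) F, k ∣ φ ∧ 0 < k.totalDegree ∧
      Irreducible (MvPolynomial.map (algebraMap F (AlgebraicClosure F)) k) ∧
      ¬ Associated k (MvPolynomial.X 0 - MvPolynomial.X 1) := by
  classical
  haveI : Fact (Nat.Prime 3) := ⟨by norm_num⟩
  -- Part 1
  have h3F : (3 : F) = 0 := by exact_mod_cast CharP.cast_eq_zero F 3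
  have h2c : (2 * c : F) = -c := by linear_combination c * h3F
  have hconv : (Polynomial.X ^ 8 + Polynomial.C (2 * c) : F[X])
      = Polynomial.X ^ 8 - Polynomial.C c := by
    rw [h2c, map_neg, sub_eq_add_neg]
  have hIrr : Irreducible (Polynomial.X ^ 8 + Polynomial.C (2 * c) : F[X]) := by
    rw [hconv]
    exact aux_irred8 h η hcard hh hη g hg c hc
  -- no root in F
  have hnoroot : ∀ x : F, x ^ 8 + 2 * c ≠ 0 := by
    intro x hx
    have hdvd : (Polynomial.X - Polynomial.C x) ∣
        (Polynomial.X ^ 8 + Polynomial.C (2 * c) : F[X]) :=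
      Polynomial.dvd_iff_isRoot.mpr (by simp [Polynomial.IsRoot, hx])
    obtain ⟨q, hq⟩ := hdvd
    rcases hIrr.isUnit_or_isUnit hq with h1 | h1
    · exact Polynomial.not_isUnit_X_sub_C x h1
    · have hdeg := congrArg Polynomial.degree hq
      rw [Polynomial.degree_X_pow_add_C (by norm_num : 0 < 8), Polynomial.degree_mul,
        Polynomial.degree_X_sub_C, Polynomial.degree_eq_zero_of_isUnit h1] at hdeg
      norm_num at hdeg
  refine ⟨hIrr, ?_, ?_⟩
  -- Part 2
  · intro E _ _ _ hnr
    haveI : CharP E 3 := charP_of_injective_algebraMap (algebraMap F E).injective 3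
    have h9 : ∀ x y : E, (x - y) ^ 9 = x ^ 9 - y ^ 9 := by
      intro x y
      have := sub_pow_char_pow (x := x) (y := y) (n := 2) (p := 3)
      norm_num at this
      exact this
    have hinj : Function.Injective (fun x : E => x ^ 9 + algebraMap F E (2 * c) * x) := by
      intro x y hxy
      by_contra hne
      have hxy' : x ^ 9 + algebraMap F E (2 * c) * x
          = y ^ 9 + algebraMap F E (2 * c) * y := hxy
      have hz : (x - y) * ((x - y) ^ 8 + algebraMap F E (2 * c)) = 0 := by
        calc (x - y) * ((x - y) ^ 8 + algebraMap F E (2 * c))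
            = (x - y) ^ 9 + algebraMap F E (2 * c) * (x - y) := by ring
          _ = x ^ 9 - y ^ 9 + algebraMap F E (2 * c) * (x - y) := by rw [h9]
          _ = x ^ 9 + algebraMap F E (2 * c) * x
              - (y ^ 9 + algebraMap F E (2 * c) * y) := by ring
          _ = 0 := by rw [hxy', sub_self]
      rcases mul_eq_zero.mp hz with h0 | h0
      · exact hne (sub_eq_zero.mp h0)
      · exact hnr (x - y) h0
    exact Finite.injective_iff_bijective.mp hinj
  -- Part 3
  · rintro ⟨k, hkdvd, -, hkirr, -⟩
    set A := AlgebraicClosure F with hA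
    -- identify φ
    have hX01 : (MvPolynomial.X 0 : MvPolynomial (Fin 2) F) ≠ MvPolynomial.X 1 := by
      intro hEq
      have h1 := congrArg (MvPolynomial.coeff (Finsupp.single (0 : Fin 2) 1)) hEq
      simp [MvPolynomial.coeff_X', Finsupp.single_eq_single_iff] at h1
    have hφ' : φ = (MvPolynomial.X 0 - MvPolynomial.X 1) ^ 8 + MvPolynomial.C (2 * c) := by
      apply mul_left_cancel₀ (sub_ne_zero.mpr hX01)
      rw [hφ]
      have h9 := sub_pow_char_pow (x := (MvPolynomial.X 0 : MvPolynomial (Fin 2) F))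
        (y := MvPolynomial.X 1) (n := 2) (p := 3)
      norm_num at h9
      simp only [map_add, map_mul, map_pow, Polynomial.aeval_X, Polynomial.aeval_C,
        MvPolynomial.algebraMap_eq]
      linear_combination -h9
    rw [hφ'] at hkdvd
    have hkbdvd : MvPolynomial.map (algebraMap F A) k ∣
        (MvPolynomial.X 0 - MvPolynomial.X 1 : MvPolynomial (Fin 2) A) ^ 8
          + MvPolynomial.C (algebraMap F A (2 * c)) := by
      have hmapped := map_dvd (MvPolynomial.map (algebraMap F A)) hkdvd
      simpa [map_pow, MvPolynomial.map_X, MvPolynomial.map_C] using hmapped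
    set P : Polynomial A := Polynomial.X ^ 8 + Polynomial.C (algebraMap F A (2 * c)) with hP
    have hPm : P.Monic := Polynomial.monic_X_pow_add_C _ (by norm_num)
    have hPfac : P = (P.roots.map (fun r => Polynomial.X - Polynomial.C r)).prod :=
      (IsAlgClosed.splits P).eq_prod_roots_of_monic hPm
    have happ : ((MvPolynomial.X 0 - MvPolynomial.X 1 : MvPolynomial (Fin 2) A)) ^ 8
        + MvPolynomial.C (algebraMap F A (2 * c))
        = (P.roots.map (fun r =>
            (MvPolynomial.X 0 - MvPolynomial.X 1 : MvPolynomial (Fin 2) A)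
              - MvPolynomial.C r)).prod := by
      have h1 : Polynomial.aeval
          (MvPolynomial.X 0 - MvPolynomial.X 1 : MvPolynomial (Fin 2) A) P
          = (MvPolynomial.X 0 - MvPolynomial.X 1) ^ 8
            + MvPolynomial.C (algebraMap F A (2 * c)) := by
        simp [hP, MvPolynomial.algebraMap_eq]
      rw [← h1]
      conv_lhs => rw [hPfac]
      rw [map_multiset_prod, Multiset.map_map]
      refine congrArg _ (Multiset.map_congr rfl ?_)
      intro r _
      simp [MvPolynomial.algebraMap_eq]
    rw [happ] at hkbdvd
    have hkpr : Prime (MvPolynomial.map (algebraMap F A) k) :=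
      (UniqueFactorizationMonoid.irreducible_iff_prime).mp hkirr
    obtain ⟨t, htmem, htdvd⟩ := hkpr.exists_mem_multiset_dvd hkbdvd
    obtain ⟨r, hrmem, rfl⟩ := Multiset.mem_map.mp htmem
    obtain ⟨m, hm⟩ := htdvd
    have hlin := aux_irred_linear (K := A) r
    rcases hlin.isUnit_or_isUnit hm with hu | hu
    · exact hkirr.not_isUnit hu
    obtain ⟨w, hw0, rfl⟩ := aux_isUnit_eq_C hu
    -- coefficient extraction
    set kb := MvPolynomial.map (algebraMap F A) k with hkb
    have hco1 := congrArg (MvPolynomial.coeff (Finsupp.single (0 : Fin 2) 1)) hm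
    have hco2 := congrArg (MvPolynomial.coeff (0 : Fin 2 →₀ ℕ)) hm
    rw [mul_comm kb (MvPolynomial.C w), MvPolynomial.coeff_C_mul] at hco1
    rw [mul_comm kb (MvPolynomial.C w), MvPolynomial.coeff_C_mul] at hco2
    have hL1 : MvPolynomial.coeff (Finsupp.single (0 : Fin 2) 1)
        (MvPolynomial.X 0 - MvPolynomial.X 1 - MvPolynomial.C r : MvPolynomial (Fin 2) A)
        = 1 := by
      simp [MvPolynomial.coeff_X', MvPolynomial.coeff_C, Finsupp.single_eq_single_iff,
        Finsupp.single_eq_zero]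
      intro h0
      have h1 := DFunLike.congr_fun h0 (0 : Fin 2)
      simp at h1
    have hL2 : MvPolynomial.coeff (0 : Fin 2 →₀ ℕ)
        (MvPolynomial.X 0 - MvPolynomial.X 1 - MvPolynomial.C r : MvPolynomial (Fin 2) A)
        = -r := by
      simp only [MvPolynomial.coeff_sub]
      rw [MvPolynomial.coeff_C]
      simp [MvPolynomial.coeff_X', Finsupp.single_eq_zero]
    rw [hL1] at hco1
    rw [hL2] at hco2
    set a0 := MvPolynomial.coeff (Finsupp.single (0 : Fin 2) 1) k with ha0
    set b0 := MvPolynomial.coeff (0 : Fin 2 →₀ ℕ) k with hb0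
    have hca : MvPolynomial.coeff (Finsupp.single (0 : Fin 2) 1) kb = algebraMap F A a0 := by
      rw [hkb, MvPolynomial.coeff_map]
    have hcb : MvPolynomial.coeff (0 : Fin 2 →₀ ℕ) kb = algebraMap F A b0 := by
      rw [hkb, MvPolynomial.coeff_map]
    rw [hca] at hco1
    rw [hcb] at hco2
    -- hco1 : 1 = w * algebraMap F A a0, hco2 : -r = w * algebraMap F A b0
    have ha0ne : a0 ≠ 0 := by
      intro h00
      rw [h00, map_zero, mul_zero] at hco1
      exact one_ne_zero hco1
    have hwval : w = (algebraMap F A a0)⁻¹ := eq_inv_of_mul_eq_one_right (by linear_combination -hco1)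
    rw [hwval] at hco2
    have hrval : r = algebraMap F A (-(b0 / a0)) := by
      have hr2 : r = -((algebraMap F A a0)⁻¹ * algebraMap F A b0) := by
        linear_combination -hco2
      rw [hr2, map_neg, map_div₀, div_eq_inv_mul]
    have hroot : r ^ 8 + algebraMap F A (2 * c) = 0 := by
      have hr' := Polynomial.isRoot_of_mem_roots hrmem
      simpa [hP, Polynomial.IsRoot] using hr'
    have hmapped0 : algebraMap F A ((-(b0 / a0)) ^ 8 + 2 * c) = 0 := by
      rw [map_add, map_pow, ← hrval, hroot]
    have : (-(b0 / a0)) ^ 8 + 2 * c = 0 := by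
      apply (algebraMap F A).injective
      rw [hmapped0, map_zero]
    exact hnoroot _ this
end
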